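/- arXiv:2506.13929 — 4 statements merged into one kernel-verified Lean document; each statement's English description precedes it below -/
import Mathlib

section
/- Let Ω ⊆ ℝⁿ be a nonempty measurable set, K an admissible kernel with D := sup_{x∈Ω} ‖K(x,·)‖_{L¹(Ω)}, and ρ a recognition function. Fix R > 0 and let L_ρ be a Lipschitz constant for ρ' on the interval [−2R, 2R]. Then for all bounded continuous u, v : Ω × [0,T] → ℝ with sup|u| ≤ R and sup|v| ≤ R, and every t ∈ [0,T], one has sup_{x∈Ω} |g[u](x,t) − g[v](x,t)| ≤ 2 L_ρ D · sup_{x∈Ω} |u(x,t) − v(x,t)|. -/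
open MeasureTheory Set

/-- Lipschitz continuity of the nonlocality `g` with respect to the sup norm:
for bounded continuous `u, v` with sup norm at most `R`, and `L_ρ` a Lipschitz constant for
`ρ'` on `[−2R, 2R]`, one has for each `t ∈ [0,T]`:
`sup_{x∈Ω} |g[u](x,t) − g[v](x,t)| ≤ 2 L_ρ D · sup_{x∈Ω} |u(x,t) − v(x,t)|`. -/
theorem statement1
    (n : ℕ) (Ω : Set (EuclideanSpace ℝ (Fin n)))
    (hΩne : Ω.Nonempty) (hΩmeas : MeasurableSet Ω)
    -- `K` is an admissible kernel:
    (K : EuclideanSpace ℝ (Fin n) → EuclideanSpace ℝ (Fin n) → ℝ)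
    (hKnonneg : ∀ x y, 0 ≤ K x y)
    (hKmeas : Measurable (Function.uncurry K))
    (hKint : ∀ x ∈ Ω, IntegrableOn (K x) Ω)
    (hKcont : ∀ x ∈ Ω, ∀ ε > (0:ℝ), ∃ δ > (0:ℝ), ∀ x' ∈ Ω, dist x' x < δ →
        (∫ y in Ω, |K x' y - K x y|) < ε)
    (D : ℝ) (hD : ∀ x ∈ Ω, (∫ y in Ω, K x y) ≤ D)
    -- `ρ` is a recognition function:
    (ρ : ℝ → ℝ) (hρ : Differentiable ℝ ρ)
    (hρ'lip : ∀ R : ℝ, 0 < R → ∃ L : ℝ, ∀ a b : ℝ, |a| ≤ R → |b| ≤ R →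
        |deriv ρ a - deriv ρ b| ≤ L * |a - b|)
    -- `R` and the Lipschitz constant `L_ρ` of `ρ'` on `[−2R, 2R]`:
    (R : ℝ) (hR : 0 < R)
    (L_ρ : ℝ) (hLρ : ∀ a b : ℝ, |a| ≤ 2 * R → |b| ≤ 2 * R →
        |deriv ρ a - deriv ρ b| ≤ L_ρ * |a - b|)
    -- `u, v` bounded continuous on `Ω × [0,T]` with sup norm at most `R`:
    (T : ℝ) (hT : 0 < T)
    (u v : EuclideanSpace ℝ (Fin n) → ℝ → ℝ)
    (hucont : ContinuousOn (fun p : EuclideanSpace ℝ (Fin n) × ℝ => u p.1 p.2) (Ω ×ˢ Icc 0 T))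
    (hvcont : ContinuousOn (fun p : EuclideanSpace ℝ (Fin n) × ℝ => v p.1 p.2) (Ω ×ˢ Icc 0 T))
    (huR : ∀ x ∈ Ω, ∀ t ∈ Icc (0:ℝ) T, |u x t| ≤ R)
    (hvR : ∀ x ∈ Ω, ∀ t ∈ Icc (0:ℝ) T, |v x t| ≤ R) :
    ∀ t ∈ Icc (0:ℝ) T,
      (⨆ x : Ω, |(∫ y in Ω, K x.1 y * deriv ρ (u x.1 t - u y t)) -
          ∫ y in Ω, K x.1 y * deriv ρ (v x.1 t - v y t)|) ≤
        2 * L_ρ * D * ⨆ x : Ω, |u x.1 t - v x.1 t| := by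

  intro t ht
  haveI : Nonempty ↥Ω := hΩne.to_subtype
  -- L_ρ ≥ 0
  have hLnn : 0 ≤ L_ρ := by
    have h1 := hLρ (2*R) 0 (by rw [abs_of_pos (by linarith)] ) (by rw [abs_zero]; positivity)
    have h2 : (0:ℝ) ≤ L_ρ * |2*R - 0| := le_trans (abs_nonneg _) h1
    have h3 : |2*R - 0| = 2*R := by rw [abs_of_pos] <;> linarith
    nlinarith
  -- D ≥ 0
  have hDnn : 0 ≤ D := by
    obtain ⟨x0, hx0⟩ := hΩne
    exact le_trans (integral_nonneg fun y => hKnonneg x0 y) (hD x0 hx0)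
  -- sup of |u - v|
  set M := ⨆ x : Ω, |u x.1 t - v x.1 t| with hM
  have hbdd : BddAbove (Set.range fun x : Ω => |u x.1 t - v x.1 t|) := by
    refine ⟨2*R, ?_⟩
    rintro _ ⟨x, rfl⟩
    have := huR x.1 x.2 t ht
    have := hvR x.1 x.2 t ht
    calc |u x.1 t - v x.1 t| ≤ |u x.1 t| + |v x.1 t| := abs_sub _ _
      _ ≤ 2*R := by linarith
  have hle : ∀ y ∈ Ω, |u y t - v y t| ≤ M := fun y hy => le_ciSup hbdd ⟨y, hy⟩
  have hMnn : 0 ≤ M := le_trans (abs_nonneg _) (hle _ hΩne.choose_spec)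
  -- continuity of deriv ρ on [-2R, 2R]
  have hderivcont : ContinuousOn (deriv ρ) (Icc (-(2*R)) (2*R)) := by
    have : LipschitzOnWith (Real.toNNReal L_ρ) (deriv ρ) (Icc (-(2*R)) (2*R)) := by
      apply LipschitzOnWith.of_dist_le_mul
      intro a ha b hb
      rw [Real.dist_eq, Real.dist_eq]
      calc |deriv ρ a - deriv ρ b| ≤ L_ρ * |a - b| :=
            hLρ a b (abs_le.mpr ⟨by linarith [ha.1], ha.2⟩)
              (abs_le.mpr ⟨by linarith [hb.1], hb.2⟩)
        _ ≤ (Real.toNNReal L_ρ : ℝ) * |a - b| :=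
            mul_le_mul_of_nonneg_right (Real.le_coe_toNNReal L_ρ) (abs_nonneg _)
    exact this.continuousOn
  -- generic integrability
  have key : ∀ w : EuclideanSpace ℝ (Fin n) → ℝ → ℝ,
      ContinuousOn (fun p : EuclideanSpace ℝ (Fin n) × ℝ => w p.1 p.2) (Ω ×ˢ Icc 0 T) →
      (∀ x ∈ Ω, ∀ s ∈ Icc (0:ℝ) T, |w x s| ≤ R) →
      ∀ x ∈ Ω, IntegrableOn (fun y => K x y * deriv ρ (w x t - w y t)) Ω := by
    intro w hwcont hwR x hx
    have hwt : ContinuousOn (fun y => w y t) Ω := by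
      have : ContinuousOn (fun y : EuclideanSpace ℝ (Fin n) => ((y, t) : _ × ℝ)) Ω :=
        (continuous_id.prodMk continuous_const).continuousOn
      exact hwcont.comp this fun y hy => ⟨hy, ht⟩
    have hmaps : Set.MapsTo (fun y => w x t - w y t) Ω (Icc (-(2*R)) (2*R)) := by
      intro y hy
      have h1 := hwR x hx t ht
      have h2 := hwR y hy t ht
      simp only [abs_le] at h1 h2
      refine ⟨?_, ?_⟩ <;> dsimp only <;> linarith [h1.1, h1.2, h2.1, h2.2]
    have hcomp : ContinuousOn (fun y => deriv ρ (w x t - w y t)) Ω :=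
      hderivcont.comp (continuousOn_const.sub hwt) hmaps
    have hKxmeas : Measurable (fun y => K x y) := hKmeas.comp measurable_prodMk_left
    have hmeas : AEStronglyMeasurable (fun y => K x y * deriv ρ (w x t - w y t))
        (volume.restrict Ω) :=
      hKxmeas.aestronglyMeasurable.mul (hcomp.aestronglyMeasurable hΩmeas)
    set C := |deriv ρ 0| + L_ρ * (2*R) with hC
    refine Integrable.mono' ((hKint x hx).const_mul C) hmeas ?_
    filter_upwards [ae_restrict_mem hΩmeas] with y hy
    have harg : |w x t - w y t| ≤ 2*R := abs_le.mpr (hmaps hy)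
    have hb : |deriv ρ (w x t - w y t)| ≤ C := by
      have h1 := hLρ (w x t - w y t) 0 harg (by rw [abs_zero]; positivity)
      have h2 : |deriv ρ (w x t - w y t)| ≤ |deriv ρ (w x t - w y t) - deriv ρ 0| + |deriv ρ 0| := by
        calc |deriv ρ (w x t - w y t)| = |(deriv ρ (w x t - w y t) - deriv ρ 0) + deriv ρ 0| := by ring_nf
          _ ≤ _ := abs_add_le _ _
      have h3 : L_ρ * |w x t - w y t - 0| ≤ L_ρ * (2*R) := by
        apply mul_le_mul_of_nonneg_left _ hLnn
        simpa using harg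
      rw [hC]; linarith
    calc ‖K x y * deriv ρ (w x t - w y t)‖ = K x y * |deriv ρ (w x t - w y t)| := by
          rw [Real.norm_eq_abs, abs_mul, abs_of_nonneg (hKnonneg x y)]
      _ ≤ K x y * C := mul_le_mul_of_nonneg_left hb (hKnonneg x y)
      _ ≤ C * K x y := by ring_nf; exact le_refl _
  -- main bound for each x
  apply ciSup_le
  rintro ⟨x, hx⟩
  have hiu := key u hucont huR x hx
  have hiv := key v hvcont hvR x hx
  have hdiff : IntegrableOn
      (fun y => K x y * deriv ρ (u x t - u y t) - K x y * deriv ρ (v x t - v y t)) Ω :=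
    hiu.sub hiv
  calc |(∫ y in Ω, K x y * deriv ρ (u x t - u y t)) - ∫ y in Ω, K x y * deriv ρ (v x t - v y t)|
      = |∫ y in Ω, (K x y * deriv ρ (u x t - u y t) - K x y * deriv ρ (v x t - v y t))| := by
        rw [integral_sub hiu hiv]
    _ ≤ ∫ y in Ω, |K x y * deriv ρ (u x t - u y t) - K x y * deriv ρ (v x t - v y t)| := by
        simpa [Real.norm_eq_abs] using
          norm_integral_le_integral_norm
            (fun y => K x y * deriv ρ (u x t - u y t) - K x y * deriv ρ (v x t - v y t))
    _ ≤ ∫ y in Ω, K x y * (L_ρ * (2*M)) := by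
        refine setIntegral_mono_on hdiff.abs ((hKint x hx).mul_const _) hΩmeas ?_
        intro y hy
        rw [← mul_sub, abs_mul, abs_of_nonneg (hKnonneg x y)]
        apply mul_le_mul_of_nonneg_left _ (hKnonneg x y)
        have hau : |u x t - u y t| ≤ 2*R := by
          have h1 := huR x hx t ht; have h2 := huR y hy t ht
          calc |u x t - u y t| ≤ |u x t| + |u y t| := abs_sub _ _
            _ ≤ 2*R := by linarith
        have hav : |v x t - v y t| ≤ 2*R := by
          have h1 := hvR x hx t ht; have h2 := hvR y hy t ht
          calc |v x t - v y t| ≤ |v x t| + |v y t| := abs_sub _ _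
            _ ≤ 2*R := by linarith
        calc |deriv ρ (u x t - u y t) - deriv ρ (v x t - v y t)|
            ≤ L_ρ * |(u x t - u y t) - (v x t - v y t)| := hLρ _ _ hau hav
          _ ≤ L_ρ * (2*M) := by
              apply mul_le_mul_of_nonneg_left _ hLnn
              have h1 := hle x hx
              have h2 := hle y hy
              calc |(u x t - u y t) - (v x t - v y t)|
                  = |(u x t - v x t) - (u y t - v y t)| := by ring_nf
                _ ≤ |u x t - v x t| + |u y t - v y t| := abs_sub _ _
                _ ≤ 2*M := by linarith
    _ = (∫ y in Ω, K x y) * (L_ρ * (2*M)) := by rw [integral_mul_const]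
    _ ≤ D * (L_ρ * (2*M)) := by
        apply mul_le_mul_of_nonneg_right (hD x hx)
        positivity
    _ = 2 * L_ρ * D * M := by ring
end

section
/- Let Ω ⊆ ℝⁿ be a nonempty measurable set, K an admissible kernel, ρ a recognition function, and u₀ : Ω → ℝ bounded and continuous. Then there exists τ > 0 such that there is exactly one bounded continuous u : Ω × [0,τ] → ℝ satisfying u(x,t) = u₀(x) + ∫₀ᵗ g[u](x,s) ds for all (x,t) ∈ Ω × [0,τ]. -/
/-!
Replace `ρ'` by a bounded, globally Lipschitz `σ` that agrees with it on a large interval. Since the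
kernels `K x` have mass at most `D`, the Picard map `u ↦ u₀ + ∫₀ᵗ g_σ[u] ds` moves the sup-distance
of two functions by at most `2 Lip(σ) D τ` on `Ω × [0, τ]`, so for small `τ` it is a contraction of
the bounded continuous functions; continuity of the image in `x` is where the `L¹`-continuity of
`x ↦ K x` enters. For `τ` small also relative to `sup |σ|`, the fixed point stays in the interval
where `σ = ρ'`, hence solves the original equation. A competing bounded solution `v` solves the
equation truncated at a larger radius, and iterating `|v - u|(t) ≤ 2 L D ∫₀ᵗ |v - u|` gives
`|v - u| ≤ B (2 L D t)ᵏ / k! → 0`.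
-/

open MeasureTheory Set

open Filter Topology Function
open scoped NNReal BoundedContinuousFunction

theorem LipschitzWith.abs_sub_le {σ : ℝ → ℝ} {L : ℝ≥0} (hσ : LipschitzWith L σ) (a b : ℝ) :
    |σ a - σ b| ≤ L * |a - b| := by
  simpa only [Real.dist_eq] using hσ.dist_le_mul a b

theorem LipschitzOnWith.exists_lipschitzWith_bounded_eqOn_Icc {f : ℝ → ℝ} {a b : ℝ} {L : ℝ≥0}
    (hab : a ≤ b) (hf : LipschitzOnWith L f (Icc a b)) :
    ∃ σ : ℝ → ℝ, LipschitzWith L σ ∧ (∃ C, ∀ z, |σ z| ≤ C) ∧ EqOn σ f (Icc a b) := by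
  obtain ⟨C, hC⟩ := isCompact_Icc.exists_bound_of_continuousOn hf.continuousOn
  refine ⟨fun z => f (projIcc a b hab z), ?_, ⟨C, fun z => hC _ (projIcc a b hab z).2⟩,
    fun z hz => by simp only [projIcc_of_mem hab hz]⟩
  have h := hf.to_restrict.comp (LipschitzWith.projIcc hab)
  rwa [mul_one] at h

theorem exists_lipschitzWith_bounded_eqOn_of_abs_sub_le {f : ℝ → ℝ}
    (hf : ∀ R : ℝ, 0 < R → ∃ L : ℝ, ∀ a b : ℝ, |a| ≤ R → |b| ≤ R → |f a - f b| ≤ L * |a - b|)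
    {R : ℝ} (hR : 0 < R) :
    ∃ (σ : ℝ → ℝ) (L : ℝ≥0), LipschitzWith L σ ∧ (∃ C, ∀ z, |σ z| ≤ C) ∧ EqOn σ f (Icc (-R) R) := by
  obtain ⟨L, hL⟩ := hf R hR
  have hLip : LipschitzOnWith L.toNNReal f (Icc (-R) R) := .of_dist_le' fun a ha b hb => by
    simpa only [Real.dist_eq] using hL a b (abs_le.2 ha) (abs_le.2 hb)
  exact ⟨_, _, (hLip.exists_lipschitzWith_bounded_eqOn_Icc (by linarith)).choose_spec⟩

theorem ContinuousOn.intervalIntegral_prod {X : Type*} [TopologicalSpace X] {F : X → ℝ → ℝ}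
    {S : Set X} {a b : ℝ} (hF : ContinuousOn (uncurry F) (S ×ˢ Icc a b)) :
    ContinuousOn (fun p : X × ℝ => ∫ s in a..p.2, F p.1 s) (S ×ˢ Icc a b) := by
  rcases lt_or_ge b a with hba | hab
  · simp [Icc_eq_empty_of_lt hba]
  have hG : Continuous fun q : S × ℝ => ∫ s in a..q.2, F q.1 (projIcc a b hab s) :=
    intervalIntegral.continuous_parametric_intervalIntegral_of_continuous
      (f := fun (q : S × ℝ) s => F q.1 (projIcc a b hab s))
      (hF.comp_continuous (f := fun p : (S × ℝ) × ℝ => ((p.1.1 : X), (projIcc a b hab p.2 : ℝ)))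
        (by fun_prop) fun p => ⟨p.1.1.2, (projIcc a b hab p.2).2⟩) continuous_snd
  rw [continuousOn_iff_continuous_domRestrict]
  convert hG.comp (f := fun q : ↥(S ×ˢ Icc a b) => ((⟨q.1.1, q.2.1⟩ : S), q.1.2)) (by fun_prop)
    using 1
  ext ⟨⟨x, t⟩, hx, ht⟩
  refine intervalIntegral.integral_congr fun s hs => ?_
  simp only [projIcc_of_mem hab (uIcc_subset_Icc ⟨le_rfl, hab⟩ ht hs)]

theorem eq_zero_of_abs_le_mul_integral {ι : Type*} {S : Set ι} {d : ι → ℝ → ℝ} {B c τ : ℝ}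
    (hB : ∀ i ∈ S, ∀ t ∈ Icc 0 τ, |d i t| ≤ B)
    (hstep : ∀ φ : ℝ → ℝ, Continuous φ → (∀ i ∈ S, ∀ t ∈ Icc 0 τ, |d i t| ≤ φ t) →
      ∀ i ∈ S, ∀ t ∈ Icc 0 τ, |d i t| ≤ c * ∫ s in (0 : ℝ)..t, φ s) :
    ∀ i ∈ S, ∀ t ∈ Icc 0 τ, d i t = 0 := by
  have hpow (k : ℕ) : ∀ i ∈ S, ∀ t ∈ Icc 0 τ, |d i t| ≤ B * (c * t) ^ k / k.factorial := by
    induction k with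
    | zero => simpa using hB
    | succ k ih =>
      refine fun i hi t ht => (hstep _ (by fun_prop) ih i hi t ht).trans_eq ?_
      have hpoly (s : ℝ) : B * (c * s) ^ k / k.factorial = B * c ^ k / k.factorial * s ^ k := by
        ring
      simp_rw [hpoly, intervalIntegral.integral_const_mul, integral_pow, Nat.factorial_succ]
      push_cast
      field_simp
      ring
  intro i hi t ht
  have hlim : Tendsto (fun k : ℕ => B * (c * t) ^ k / k.factorial) atTop (𝓝 0) := by
    simpa [mul_div_assoc] using (FloorSemiring.tendsto_pow_div_factorial_atTop (c * t)).const_mul B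
  exact abs_nonpos_iff.1 (ge_of_tendsto' hlim fun k => hpow k i hi t ht)

theorem abs_setIntegral_mul_le {α : Type*} [MeasurableSpace α] {μ : Measure α} {Ω : Set α}
    {k ψ : α → ℝ} {c : ℝ} (hΩ : MeasurableSet Ω)
    (hk : IntegrableOn k Ω μ) (hψ : ∀ y ∈ Ω, |ψ y| ≤ c) :
    |∫ y in Ω, k y * ψ y ∂μ| ≤ c * ∫ y in Ω, |k y| ∂μ := by
  rw [← Real.norm_eq_abs, ← integral_const_mul]
  refine norm_integral_le_of_norm_le (hk.abs.const_mul c) ?_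
  filter_upwards [ae_restrict_mem hΩ] with y hy
  rw [Real.norm_eq_abs, abs_mul, mul_comm c]
  exact mul_le_mul_of_nonneg_left (hψ y hy) (abs_nonneg _)

namespace NonlocalIVP

section

variable {α : Type*} [MeasurableSpace α] {μ : Measure α} {Ω : Set α}

/-- The nonlocality `g[f](x)` of a function `f` of space, with `ρ'` replaced by `σ`. -/
noncomputable def nonlocal (μ : Measure α) (Ω : Set α) (K : α → α → ℝ) (σ : ℝ → ℝ)
    (f : α → ℝ) (x : α) : ℝ :=
  ∫ y in Ω, K x y * σ (f x - f y) ∂μ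

noncomputable def picard (μ : Measure α) (Ω : Set α) (K : α → α → ℝ) (σ : ℝ → ℝ) (u₀ : α → ℝ)
    (u : α → ℝ → ℝ) (x : α) (t : ℝ) : ℝ :=
  u₀ x + ∫ s in (0 : ℝ)..t, nonlocal μ Ω K σ (u · s) x

variable {K : α → α → ℝ} {σ : ℝ → ℝ} {u₀ : α → ℝ} {u : α → ℝ → ℝ} {x : α} {t τ : ℝ}

theorem picard_eq_picard_of_eqOn (hΩ : MeasurableSet Ω) {σ' : ℝ → ℝ} {R : ℝ}
    (hσ : EqOn σ σ' (Icc (-(2 * R)) (2 * R))) (hu : ∀ y ∈ Ω, ∀ s ∈ Icc 0 τ, |u y s| ≤ R)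
    (hx : x ∈ Ω) (ht : t ∈ Icc 0 τ) : picard μ Ω K σ u₀ u x t = picard μ Ω K σ' u₀ u x t := by
  refine congrArg (u₀ x + ·) (intervalIntegral.integral_congr fun s hs => ?_)
  have hs' := uIcc_subset_Icc ⟨le_rfl, ht.1.trans ht.2⟩ ht hs
  refine setIntegral_congr_fun hΩ fun y hy => congrArg (K x y * ·) (hσ ?_)
  rw [mem_Icc, ← abs_le]
  linarith [abs_sub (u x s) (u y s), hu x hx s hs', hu y hy s hs']

end

section

variable {α : Type*} [MeasurableSpace α] {μ : Measure α} {Ω : Set α} [TopologicalSpace α]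

structure IsAdmissibleKernel (μ : Measure α) (Ω : Set α) (K : α → α → ℝ) (D : ℝ) : Prop where
  measurableSet : MeasurableSet Ω
  nonneg : ∀ x y, 0 ≤ K x y
  integrableOn : ∀ x ∈ Ω, IntegrableOn (K x) Ω μ
  integral_le : ∀ x ∈ Ω, ∫ y in Ω, K x y ∂μ ≤ D
  tendsto_integral_abs_sub :
    ∀ x₀ ∈ Ω, Tendsto (fun x => ∫ y in Ω, |K x y - K x₀ y| ∂μ) (𝓝[Ω] x₀) (𝓝 0)

namespace IsAdmissibleKernel

variable {K : α → α → ℝ} {D : ℝ} {σ : ℝ → ℝ} {L : ℝ≥0} {C : ℝ} {f g : α → ℝ} {x x₀ : α}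

theorem nonneg_of_mem (hK : IsAdmissibleKernel μ Ω K D) (hx : x ∈ Ω) : 0 ≤ D :=
  (setIntegral_nonneg hK.measurableSet fun y _ => hK.nonneg x y).trans (hK.integral_le x hx)

theorem abs_integral_mul_le (hK : IsAdmissibleKernel μ Ω K D) (hx : x ∈ Ω) {ψ : α → ℝ} {c : ℝ}
    (hc : 0 ≤ c) (hψ : ∀ y ∈ Ω, |ψ y| ≤ c) : |∫ y in Ω, K x y * ψ y ∂μ| ≤ c * D := by
  calc |∫ y in Ω, K x y * ψ y ∂μ| ≤ c * ∫ y in Ω, |K x y| ∂μ :=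
        abs_setIntegral_mul_le hK.measurableSet (hK.integrableOn x hx) hψ
    _ = c * ∫ y in Ω, K x y ∂μ := by simp_rw [abs_of_nonneg (hK.nonneg x _)]
    _ ≤ c * D := mul_le_mul_of_nonneg_left (hK.integral_le x hx) hc

theorem integrableOn_mul_comp_sub (hK : IsAdmissibleKernel μ Ω K D) (hx : x ∈ Ω)
    (hσ : Continuous σ) (hσC : ∀ z, |σ z| ≤ C) (hf : AEStronglyMeasurable f (μ.restrict Ω))
    (a : ℝ) : IntegrableOn (fun y => K x y * σ (a - f y)) Ω μ :=
  (hK.integrableOn x hx).mul_bdd (hσ.comp_aestronglyMeasurable (aestronglyMeasurable_const.sub hf))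
    (ae_of_all _ fun _ => hσC _)

theorem abs_nonlocal_le (hK : IsAdmissibleKernel μ Ω K D) (hx : x ∈ Ω) (hσC : ∀ z, |σ z| ≤ C) :
    |nonlocal μ Ω K σ f x| ≤ C * D :=
  hK.abs_integral_mul_le hx ((abs_nonneg _).trans (hσC 0)) fun _ _ => hσC _

theorem abs_nonlocal_sub_nonlocal_le (hK : IsAdmissibleKernel μ Ω K D) (hx : x ∈ Ω)
    (hσ : LipschitzWith L σ) (hσC : ∀ z, |σ z| ≤ C) (hf : AEStronglyMeasurable f (μ.restrict Ω))
    (hg : AEStronglyMeasurable g (μ.restrict Ω)) {δ : ℝ} (hfg : ∀ y ∈ Ω, |f y - g y| ≤ δ) :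
    |nonlocal μ Ω K σ f x - nonlocal μ Ω K σ g x| ≤ 2 * L * D * δ := by
  have hδ : 0 ≤ δ := (abs_nonneg _).trans (hfg x hx)
  rw [nonlocal, nonlocal, ← integral_sub (hK.integrableOn_mul_comp_sub hx hσ.continuous hσC hf _)
    (hK.integrableOn_mul_comp_sub hx hσ.continuous hσC hg _)]
  simp_rw [← mul_sub]
  refine (hK.abs_integral_mul_le hx (c := L * (2 * δ)) (by positivity) fun y hy => ?_).trans_eq
    (by ring)
  calc |σ (f x - f y) - σ (g x - g y)| ≤ L * |(f x - g x) - (f y - g y)| := by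
        rw [sub_sub_sub_comm]; exact hσ.abs_sub_le _ _
    _ ≤ L * (2 * δ) := by
        gcongr
        linarith [abs_sub (f x - g x) (f y - g y), hfg x hx, hfg y hy]

theorem abs_nonlocal_sub_nonlocal_le_integral_abs_sub (hK : IsAdmissibleKernel μ Ω K D) (hx : x ∈ Ω)
    (hx₀ : x₀ ∈ Ω) (hσ : LipschitzWith L σ) (hσC : ∀ z, |σ z| ≤ C)
    (hf : AEStronglyMeasurable f (μ.restrict Ω)) :
    |nonlocal μ Ω K σ f x - nonlocal μ Ω K σ f x₀| ≤
      C * ∫ y in Ω, |K x y - K x₀ y| ∂μ + L * |f x - f x₀| * D := by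
  have hint := fun z (hz : z ∈ Ω) a => hK.integrableOn_mul_comp_sub hz hσ.continuous hσC hf a
  have hsplit : nonlocal μ Ω K σ f x - nonlocal μ Ω K σ f x₀ =
      (∫ y in Ω, (K x y - K x₀ y) * σ (f x - f y) ∂μ) +
        ∫ y in Ω, K x₀ y * (σ (f x - f y) - σ (f x₀ - f y)) ∂μ := by
    simp_rw [sub_mul, mul_sub]
    rw [integral_sub (hint x hx _) (hint x₀ hx₀ _), integral_sub (hint x₀ hx₀ _) (hint x₀ hx₀ _),
      nonlocal, nonlocal]
    ring
  rw [hsplit]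
  refine (abs_add_le _ _).trans (add_le_add ?_ ?_)
  · exact abs_setIntegral_mul_le hK.measurableSet
      ((hK.integrableOn x hx).sub (hK.integrableOn x₀ hx₀)) fun _ _ => hσC _
  · refine hK.abs_integral_mul_le hx₀ (by positivity) fun y _ => ?_
    simpa using hσ.abs_sub_le (f x - f y) (f x₀ - f y)

variable [OpensMeasurableSpace α]

theorem continuousOn_nonlocal_apply (hK : IsAdmissibleKernel μ Ω K D) (hσ : LipschitzWith L σ)
    (hσC : ∀ z, |σ z| ≤ C) {u : α → ℝ → ℝ} {I : Set ℝ} (hu : ContinuousOn (uncurry u) (Ω ×ˢ I))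
    (hx₀ : x₀ ∈ Ω) : ContinuousOn (fun s => nonlocal μ Ω K σ (u · s) x₀) I := by
  intro s₀ hs₀
  refine continuousWithinAt_of_dominated (bound := fun y => C * K x₀ y) ?_ ?_
    ((hK.integrableOn x₀ hx₀).const_mul C) ?_
  · filter_upwards [self_mem_nhdsWithin] with s hs
    exact (hK.integrableOn_mul_comp_sub hx₀ hσ.continuous hσC
      ((hu.uncurry_right s hs).aestronglyMeasurable hK.measurableSet) _).aestronglyMeasurable
  · filter_upwards with s
    filter_upwards with y
    rw [Real.norm_eq_abs, abs_mul, abs_of_nonneg (hK.nonneg x₀ y), mul_comm]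
    exact mul_le_mul_of_nonneg_right (hσC _) (hK.nonneg x₀ y)
  · filter_upwards [ae_restrict_mem hK.measurableSet] with y hy
    exact continuousWithinAt_const.mul (hσ.continuous.continuousAt.comp_continuousWithinAt
      ((hu.uncurry_left x₀ hx₀ s₀ hs₀).sub (hu.uncurry_left y hy s₀ hs₀)))

theorem continuousOn_nonlocal (hK : IsAdmissibleKernel μ Ω K D) (hσ : LipschitzWith L σ)
    (hσC : ∀ z, |σ z| ≤ C) {u : α → ℝ → ℝ} {I : Set ℝ} (hu : ContinuousOn (uncurry u) (Ω ×ˢ I)) :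
    ContinuousOn (fun p : α × ℝ => nonlocal μ Ω K σ (u · p.2) p.1) (Ω ×ˢ I) := by
  rintro ⟨x₀, s₀⟩ ⟨hx₀, hs₀⟩
  have hfst : Tendsto Prod.fst (𝓝[Ω ×ˢ I] (x₀, s₀)) (𝓝[Ω] x₀) :=
    continuous_fst.continuousWithinAt.tendsto_nhdsWithin fun p hp => hp.1
  have hsnd : Tendsto Prod.snd (𝓝[Ω ×ˢ I] (x₀, s₀)) (𝓝[I] s₀) :=
    continuous_snd.continuousWithinAt.tendsto_nhdsWithin fun p hp => hp.2
  have hux₀ : Tendsto (fun p : α × ℝ => u x₀ p.2) (𝓝[Ω ×ˢ I] (x₀, s₀)) (𝓝 (u x₀ s₀)) :=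
    (hu _ ⟨hx₀, hs₀⟩).tendsto.comp (f := fun p : α × ℝ => (x₀, p.2)) <|
      (continuous_const.prodMk continuous_snd).continuousWithinAt.tendsto_nhdsWithin
        fun p hp => ⟨hx₀, hp.2⟩
  have hspace : Tendsto (fun p : α × ℝ =>
      nonlocal μ Ω K σ (u · p.2) p.1 - nonlocal μ Ω K σ (u · p.2) x₀)
      (𝓝[Ω ×ˢ I] (x₀, s₀)) (𝓝 0) := by
    refine squeeze_zero_norm' (a := fun p : α × ℝ => C * ∫ y in Ω, |K p.1 y - K x₀ y| ∂μ +
      L * |u p.1 p.2 - u x₀ p.2| * D) ?_ ?_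
    · filter_upwards [self_mem_nhdsWithin] with p ⟨hx, hs⟩
      exact hK.abs_nonlocal_sub_nonlocal_le_integral_abs_sub hx hx₀ hσ hσC
        ((hu.uncurry_right _ hs).aestronglyMeasurable hK.measurableSet)
    · have h := ((hK.tendsto_integral_abs_sub x₀ hx₀).comp hfst).const_mul C |>.add
        ((((hu _ ⟨hx₀, hs₀⟩).tendsto.sub hux₀).abs.const_mul (L : ℝ)).mul_const D)
      simpa [uncurry_def] using h
  have htime := (continuousOn_nonlocal_apply hK hσ hσC hu hx₀ s₀ hs₀).tendsto.comp hsnd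
  simpa [ContinuousWithinAt] using hspace.add htime

end IsAdmissibleKernel

variable {K : α → α → ℝ} {D : ℝ} {σ : ℝ → ℝ} {L : ℝ≥0} {C : ℝ} {u₀ : α → ℝ} {u v w : α → ℝ → ℝ}
  {x : α} {t τ : ℝ}

theorem abs_picard_le (hK : IsAdmissibleKernel μ Ω K D) (hσC : ∀ z, |σ z| ≤ C) (hx : x ∈ Ω) :
    |picard μ Ω K σ u₀ u x t| ≤ |u₀ x| + C * D * |t| := by
  refine (abs_add_le _ _).trans (add_le_add_right ?_ _)
  simpa using intervalIntegral.norm_integral_le_of_norm_le_const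
    (a := 0) (b := t) (f := fun s => nonlocal μ Ω K σ (u · s) x) fun _ _ =>
      hK.abs_nonlocal_le hx hσC

variable [OpensMeasurableSpace α]

theorem continuousOn_picard (hK : IsAdmissibleKernel μ Ω K D) (hσ : LipschitzWith L σ)
    (hσC : ∀ z, |σ z| ≤ C) (hu₀ : ContinuousOn u₀ Ω)
    (hu : ContinuousOn (uncurry u) (Ω ×ˢ Icc 0 τ)) :
    ContinuousOn (uncurry (picard μ Ω K σ u₀ u)) (Ω ×ˢ Icc 0 τ) :=
  (hu₀.comp continuousOn_fst fun _ hp => hp.1).add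
    (ContinuousOn.intervalIntegral_prod (F := fun x s => nonlocal μ Ω K σ (u · s) x)
      (hK.continuousOn_nonlocal hσ hσC hu))

theorem abs_picard_sub_picard_le (hK : IsAdmissibleKernel μ Ω K D) (hσ : LipschitzWith L σ)
    (hσC : ∀ z, |σ z| ≤ C) (hv : ContinuousOn (uncurry v) (Ω ×ˢ Icc 0 τ))
    (hw : ContinuousOn (uncurry w) (Ω ×ˢ Icc 0 τ)) {φ : ℝ → ℝ} (hφ : Continuous φ)
    (hvw : ∀ y ∈ Ω, ∀ s ∈ Icc 0 τ, |v y s - w y s| ≤ φ s) (hx : x ∈ Ω) (ht : t ∈ Icc 0 τ) :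
    |picard μ Ω K σ u₀ v x t - picard μ Ω K σ u₀ w x t| ≤ 2 * L * D * ∫ s in (0 : ℝ)..t, φ s := by
  have hsub : Icc 0 t ⊆ Icc 0 τ := Icc_subset_Icc_right ht.2
  have hint : ∀ u : α → ℝ → ℝ, ContinuousOn (uncurry u) (Ω ×ˢ Icc 0 τ) →
      IntervalIntegrable (fun s => nonlocal μ Ω K σ (u · s) x) volume 0 t := fun u hu =>
    ((hK.continuousOn_nonlocal_apply hσ hσC hu hx).mono
      (by rwa [uIcc_of_le ht.1])).intervalIntegrable
  rw [picard, picard, add_sub_add_left_eq_sub,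
    ← intervalIntegral.integral_sub (hint v hv) (hint w hw),
    ← intervalIntegral.integral_const_mul, ← Real.norm_eq_abs]
  refine intervalIntegral.norm_integral_le_of_norm_le ht.1 (ae_of_all _ fun s hs => ?_)
    (hφ.intervalIntegrable _ _ |>.const_mul _)
  have hs : s ∈ Icc 0 τ := hsub (Ioc_subset_Icc_self hs)
  exact hK.abs_nonlocal_sub_nonlocal_le hx hσ hσC
    ((hv.uncurry_right s hs).aestronglyMeasurable hK.measurableSet)
    ((hw.uncurry_right s hs).aestronglyMeasurable hK.measurableSet) fun y hy => hvw y hy s hs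

theorem exists_picard_fixedPoint (hK : IsAdmissibleKernel μ Ω K D) (hσ : LipschitzWith L σ)
    (hσC : ∀ z, |σ z| ≤ C) (hu₀ : ContinuousOn u₀ Ω) {M₀ : ℝ} (hu₀M : ∀ x ∈ Ω, |u₀ x| ≤ M₀)
    (hτ : τ * (2 * L * D) < 1) :
    ∃ w : α → ℝ → ℝ, ContinuousOn (uncurry w) (Ω ×ˢ Icc 0 τ) ∧
      (∀ x ∈ Ω, ∀ t ∈ Icc 0 τ, |w x t| ≤ M₀ + C * D * τ) ∧
      ∀ x ∈ Ω, ∀ t ∈ Icc 0 τ, w x t = picard μ Ω K σ u₀ w x t := by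
  set S := Ω ×ˢ Icc (0 : ℝ) τ
  let ext (f : S →ᵇ ℝ) : α → ℝ → ℝ := curry (Function.extend Subtype.val f 0)
  have ext_apply (f : S →ᵇ ℝ) (p : S) : ext f p.1.1 p.1.2 = f p :=
    Subtype.val_injective.extend_apply _ _ p
  have hext (f : S →ᵇ ℝ) : ContinuousOn (uncurry (ext f)) S := by
    rw [continuousOn_iff_continuous_domRestrict]
    convert f.continuous
    exact funext (ext_apply f)
  have hbound (f : S →ᵇ ℝ) : ∀ x ∈ Ω, ∀ t ∈ Icc 0 τ, |picard μ Ω K σ u₀ (ext f) x t| ≤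
      M₀ + C * D * τ := fun x hx t ht => by
    have hCD : 0 ≤ C * D := mul_nonneg ((abs_nonneg _).trans (hσC 0)) (hK.nonneg_of_mem hx)
    refine (abs_picard_le hK hσC hx).trans (add_le_add (hu₀M x hx) ?_)
    rw [abs_of_nonneg ht.1]
    exact mul_le_mul_of_nonneg_left ht.2 hCD
  let T (f : S →ᵇ ℝ) : S →ᵇ ℝ := .ofNormedAddCommGroup _
    (continuousOn_iff_continuous_domRestrict.1 (continuousOn_picard hK hσ hσC hu₀ (hext f)))
    (M₀ + C * D * τ) fun p => hbound f _ p.2.1 _ p.2.2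
  have hT : ContractingWith (τ * (2 * L * D)).toNNReal T := by
    refine ⟨by simpa using hτ, LipschitzWith.of_dist_le_mul fun f g => ?_⟩
    refine (BoundedContinuousFunction.dist_le (by positivity)).2 fun ⟨⟨x, t⟩, hx, ht⟩ => ?_
    have hLD : 0 ≤ 2 * L * D := by have := hK.nonneg_of_mem hx; positivity
    rw [Real.dist_eq]
    calc |picard μ Ω K σ u₀ (ext f) x t - picard μ Ω K σ u₀ (ext g) x t|
        ≤ 2 * L * D * ∫ _ in (0 : ℝ)..t, dist f g :=
          abs_picard_sub_picard_le hK hσ hσC (hext f) (hext g) continuous_const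
            (fun y hy s hs => by
              rw [ext_apply f ⟨(y, s), hy, hs⟩, ext_apply g ⟨(y, s), hy, hs⟩, ← Real.dist_eq]
              exact BoundedContinuousFunction.dist_coe_le_dist _) hx ht
      _ = 2 * L * D * dist f g * t := by
          rw [intervalIntegral.integral_const, sub_zero, smul_eq_mul]
          ring
      _ ≤ 2 * L * D * dist f g * τ := mul_le_mul_of_nonneg_left ht.2 (by positivity)
      _ = τ * (2 * L * D) * dist f g := by ring
      _ ≤ _ := mul_le_mul_of_nonneg_right (Real.le_coe_toNNReal _) dist_nonneg
  have hfix : ∀ x ∈ Ω, ∀ t ∈ Icc 0 τ, ext (hT.fixedPoint T) x t =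
      picard μ Ω K σ u₀ (ext (hT.fixedPoint T)) x t := fun x hx t ht => by
    rw [ext_apply _ ⟨(x, t), hx, ht⟩]
    exact (congrArg (· ⟨(x, t), hx, ht⟩) (hT.fixedPoint_isFixedPt (f := T))).symm
  exact ⟨_, hext _, fun x hx t ht => hfix x hx t ht ▸ hbound _ x hx t ht, hfix⟩

theorem picard_fixedPoint_unique (hK : IsAdmissibleKernel μ Ω K D) (hσ : LipschitzWith L σ)
    (hσC : ∀ z, |σ z| ≤ C) (hv : ContinuousOn (uncurry v) (Ω ×ˢ Icc 0 τ))
    (hw : ContinuousOn (uncurry w) (Ω ×ˢ Icc 0 τ)) {R : ℝ}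
    (hvR : ∀ x ∈ Ω, ∀ t ∈ Icc 0 τ, |v x t| ≤ R) (hwR : ∀ x ∈ Ω, ∀ t ∈ Icc 0 τ, |w x t| ≤ R)
    (hvfix : ∀ x ∈ Ω, ∀ t ∈ Icc 0 τ, v x t = picard μ Ω K σ u₀ v x t)
    (hwfix : ∀ x ∈ Ω, ∀ t ∈ Icc 0 τ, w x t = picard μ Ω K σ u₀ w x t) :
    ∀ x ∈ Ω, ∀ t ∈ Icc 0 τ, v x t = w x t := by
  have hvw (x) (hx : x ∈ Ω) (t) (ht : t ∈ Icc 0 τ) : |v x t - w x t| ≤ 2 * R := by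
    linarith [abs_sub (v x t) (w x t), hvR x hx t ht, hwR x hx t ht]
  have h := eq_zero_of_abs_le_mul_integral (d := fun x t => v x t - w x t) hvw
    fun φ hφ hle x hx t ht => by
      rw [hvfix x hx t ht, hwfix x hx t ht]
      exact abs_picard_sub_picard_le hK hσ hσC hv hw hφ hle hx ht
  exact fun x hx t ht => sub_eq_zero.1 (h x hx t ht)

end

end NonlocalIVP

open NonlocalIVP

theorem statement2_general
    (n : ℕ) (Ω : Set (EuclideanSpace ℝ (Fin n)))
    (hΩmeas : MeasurableSet Ω)
    -- `K` is an admissible kernel: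
    (K : EuclideanSpace ℝ (Fin n) → EuclideanSpace ℝ (Fin n) → ℝ)
    (hKnonneg : ∀ x y, 0 ≤ K x y)
    (hKint : ∀ x ∈ Ω, IntegrableOn (K x) Ω)
    (hKcont : ∀ x ∈ Ω, ∀ ε > (0:ℝ), ∃ δ > (0:ℝ), ∀ x' ∈ Ω, dist x' x < δ →
        (∫ y in Ω, |K x' y - K x y|) < ε)
    (D : ℝ) (hD : ∀ x ∈ Ω, (∫ y in Ω, K x y) ≤ D)
    -- `ρ` is a recognition function:
    (ρ : ℝ → ℝ)
    (hρ'lip : ∀ R : ℝ, 0 < R → ∃ L : ℝ, ∀ a b : ℝ, |a| ≤ R → |b| ≤ R →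
        |deriv ρ a - deriv ρ b| ≤ L * |a - b|)
    -- `u₀` bounded and continuous on `Ω`:
    (u₀ : EuclideanSpace ℝ (Fin n) → ℝ)
    (hu₀cont : ContinuousOn u₀ Ω) (M₀ : ℝ) (hu₀bd : ∀ x ∈ Ω, |u₀ x| ≤ M₀) :
    ∃ τ > (0:ℝ), ∃ u : EuclideanSpace ℝ (Fin n) → ℝ → ℝ,
      (ContinuousOn (fun p : EuclideanSpace ℝ (Fin n) × ℝ => u p.1 p.2) (Ω ×ˢ Icc 0 τ) ∧
       (∃ M : ℝ, ∀ x ∈ Ω, ∀ t ∈ Icc (0:ℝ) τ, |u x t| ≤ M) ∧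
       (∀ x ∈ Ω, ∀ t ∈ Icc (0:ℝ) τ,
          u x t = u₀ x + ∫ s in (0:ℝ)..t, ∫ y in Ω, K x y * deriv ρ (u x s - u y s))) ∧
      (∀ v : EuclideanSpace ℝ (Fin n) → ℝ → ℝ,
        ContinuousOn (fun p : EuclideanSpace ℝ (Fin n) × ℝ => v p.1 p.2) (Ω ×ˢ Icc 0 τ) →
        (∃ M : ℝ, ∀ x ∈ Ω, ∀ t ∈ Icc (0:ℝ) τ, |v x t| ≤ M) →
        (∀ x ∈ Ω, ∀ t ∈ Icc (0:ℝ) τ,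
          v x t = u₀ x + ∫ s in (0:ℝ)..t, ∫ y in Ω, K x y * deriv ρ (v x s - v y s)) →
        ∀ x ∈ Ω, ∀ t ∈ Icc (0:ℝ) τ, v x t = u x t) := by
  have hK : IsAdmissibleKernel volume Ω K (max D 0) :=
    { measurableSet := hΩmeas
      nonneg := hKnonneg
      integrableOn := hKint
      integral_le := fun x hx => (hD x hx).trans (le_max_left _ _)
      tendsto_integral_abs_sub := fun x₀ hx₀ => Metric.tendsto_nhdsWithin_nhds.2 fun ε hε =>
        (hKcont x₀ hx₀ ε hε).imp fun δ ⟨hδ, h⟩ => ⟨hδ, fun {x} hx hdist => by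
          simpa [abs_of_nonneg (integral_nonneg fun _ => abs_nonneg _)] using h _ hx hdist⟩ }
  set R := |M₀| + 1
  obtain ⟨σ, L, hσ, ⟨C, hσC⟩, hσρ⟩ :=
    exists_lipschitzWith_bounded_eqOn_of_abs_sub_le hρ'lip (R := 2 * R) (by positivity)
  have hC : 0 ≤ C := (abs_nonneg _).trans (hσC 0)
  -- `τ = A⁻¹` makes the truncated Picard map a contraction and keeps its fixed point in `[-R, R]`.
  set A := 1 + C * max D 0 + 2 * L * max D 0
  have hA : 0 < A := by positivity
  obtain ⟨w, hwc, hwb, hwσ⟩ := exists_picard_fixedPoint (τ := A⁻¹) hK hσ hσC hu₀cont hu₀bd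
    (by rw [inv_mul_lt_one₀ hA]; linarith [mul_nonneg hC (le_max_right D 0)])
  have hwR : ∀ x ∈ Ω, ∀ t ∈ Icc 0 A⁻¹, |w x t| ≤ R := fun x hx t ht => by
    have hLD : 0 ≤ 2 * L * max D 0 := by positivity
    have : C * max D 0 * A⁻¹ ≤ 1 := mul_inv_le_one_of_le₀ (by linarith) hA.le
    linarith [hwb x hx t ht, le_abs_self M₀]
  have hwρ : ∀ x ∈ Ω, ∀ t ∈ Icc 0 A⁻¹, w x t = picard volume Ω K (deriv ρ) u₀ w x t :=
    fun x hx t ht => (hwσ x hx t ht).trans (picard_eq_picard_of_eqOn hΩmeas hσρ hwR hx ht)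
  refine ⟨A⁻¹, inv_pos.2 hA, w, ⟨hwc, ⟨R, hwR⟩, hwρ⟩, ?_⟩
  rintro v hvc ⟨M, hvM⟩ hvρ
  obtain ⟨σ', L', hσ', ⟨C', hσ'C⟩, hσ'ρ⟩ :=
    exists_lipschitzWith_bounded_eqOn_of_abs_sub_le hρ'lip (R := 2 * max M R) (by positivity)
  have hvR : ∀ x ∈ Ω, ∀ t ∈ Icc 0 A⁻¹, |v x t| ≤ max M R :=
    fun x hx t ht => (hvM x hx t ht).trans (le_max_left _ _)
  have hwR' : ∀ x ∈ Ω, ∀ t ∈ Icc 0 A⁻¹, |w x t| ≤ max M R :=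
    fun x hx t ht => (hwR x hx t ht).trans (le_max_right _ _)
  exact picard_fixedPoint_unique hK hσ' hσ'C hvc hwc hvR hwR'
    (fun x hx t ht => (hvρ x hx t ht).trans (picard_eq_picard_of_eqOn hΩmeas hσ'ρ.symm hvR hx ht))
    (fun x hx t ht => (hwρ x hx t ht).trans (picard_eq_picard_of_eqOn hΩmeas hσ'ρ.symm hwR' hx ht))

/-- Short time existence and uniqueness.  Given an admissible kernel `K`,
a recognition function `ρ` and bounded continuous initial datum `u₀`, there is a `τ > 0`
for which there is exactly one bounded continuous `u : Ω × [0,τ] → ℝ` satisfying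
`u(x,t) = u₀(x) + ∫₀ᵗ g[u](x,s) ds` on `Ω × [0,τ]`. -/
theorem statement2
    (n : ℕ) (Ω : Set (EuclideanSpace ℝ (Fin n)))
    (hΩne : Ω.Nonempty) (hΩmeas : MeasurableSet Ω)
    -- `K` is an admissible kernel:
    (K : EuclideanSpace ℝ (Fin n) → EuclideanSpace ℝ (Fin n) → ℝ)
    (hKnonneg : ∀ x y, 0 ≤ K x y)
    (hKmeas : Measurable (Function.uncurry K))
    (hKint : ∀ x ∈ Ω, IntegrableOn (K x) Ω)
    (hKcont : ∀ x ∈ Ω, ∀ ε > (0:ℝ), ∃ δ > (0:ℝ), ∀ x' ∈ Ω, dist x' x < δ →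
        (∫ y in Ω, |K x' y - K x y|) < ε)
    (D : ℝ) (hD : ∀ x ∈ Ω, (∫ y in Ω, K x y) ≤ D)
    -- `ρ` is a recognition function:
    (ρ : ℝ → ℝ) (hρ : Differentiable ℝ ρ)
    (hρ'lip : ∀ R : ℝ, 0 < R → ∃ L : ℝ, ∀ a b : ℝ, |a| ≤ R → |b| ≤ R →
        |deriv ρ a - deriv ρ b| ≤ L * |a - b|)
    -- `u₀` bounded and continuous on `Ω`:
    (u₀ : EuclideanSpace ℝ (Fin n) → ℝ)
    (hu₀cont : ContinuousOn u₀ Ω) (M₀ : ℝ) (hu₀bd : ∀ x ∈ Ω, |u₀ x| ≤ M₀) :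
    ∃ τ > (0:ℝ), ∃ u : EuclideanSpace ℝ (Fin n) → ℝ → ℝ,
      (ContinuousOn (fun p : EuclideanSpace ℝ (Fin n) × ℝ => u p.1 p.2) (Ω ×ˢ Icc 0 τ) ∧
       (∃ M : ℝ, ∀ x ∈ Ω, ∀ t ∈ Icc (0:ℝ) τ, |u x t| ≤ M) ∧
       (∀ x ∈ Ω, ∀ t ∈ Icc (0:ℝ) τ,
          u x t = u₀ x + ∫ s in (0:ℝ)..t, ∫ y in Ω, K x y * deriv ρ (u x s - u y s))) ∧
      (∀ v : EuclideanSpace ℝ (Fin n) → ℝ → ℝ,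
        ContinuousOn (fun p : EuclideanSpace ℝ (Fin n) × ℝ => v p.1 p.2) (Ω ×ˢ Icc 0 τ) →
        (∃ M : ℝ, ∀ x ∈ Ω, ∀ t ∈ Icc (0:ℝ) τ, |v x t| ≤ M) →
        (∀ x ∈ Ω, ∀ t ∈ Icc (0:ℝ) τ,
          v x t = u₀ x + ∫ s in (0:ℝ)..t, ∫ y in Ω, K x y * deriv ρ (v x s - v y s)) →
        ∀ x ∈ Ω, ∀ t ∈ Icc (0:ℝ) τ, v x t = u x t) :=
  statement2_general n Ω hΩmeas K hKnonneg hKint hKcont D hD ρ hρ'lip u₀ hu₀cont M₀ hu₀bd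
end

section
/- Let Ω ⊆ ℝⁿ be a nonempty measurable set, K an admissible kernel, and ρ a recognition function satisfying the coordination condition. If u is a solution of the initial value problem u_t = g[u] with initial datum u₀ on Ω × [0,T], then for all 0 ≤ t₁ ≤ t₂ ≤ T, sup_{x∈Ω} |u(x,t₂)| ≤ sup_{x∈Ω} |u(x,t₁)|; in particular sup_{x∈Ω} |u(x,t)| ≤ sup_{x∈Ω} |u₀(x)| for all t ∈ [0,T]. -/
open MeasureTheory Set Filter Topology

lemma lipCont {q : ℝ → ℝ}
    (h : ∀ R : ℝ, 0 < R → ∃ L : ℝ, ∀ a b : ℝ, |a| ≤ R → |b| ≤ R →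
      |q a - q b| ≤ L * |a - b|) : Continuous q := by
  rw [continuous_iff_continuousAt]
  intro x
  obtain ⟨L, hL⟩ := h (|x| + 1) (by positivity)
  rw [Metric.continuousAt_iff]
  intro ε hε
  set L' : ℝ := max L 0 with hL'
  refine ⟨min 1 (ε / (L' + 1)), by positivity, fun y hy => ?_⟩
  have hy1 : |y - x| < 1 := lt_of_lt_of_le hy (min_le_left _ _)
  have hy2 : |y - x| < ε / (L' + 1) := lt_of_lt_of_le hy (min_le_right _ _)
  have hyb : |y| ≤ |x| + 1 := by
    have := abs_sub_abs_le_abs_sub y x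
    linarith
  have h1 : |q y - q x| ≤ L * |y - x| := hL y x hyb (by linarith [abs_nonneg x])
  have h2 : L * |y - x| ≤ L' * |y - x| :=
    mul_le_mul_of_nonneg_right (le_max_left _ _) (abs_nonneg _)
  have hL0 : (0:ℝ) ≤ L' := le_max_right _ _
  calc dist (q y) (q x) = |q y - q x| := Real.dist_eq _ _
    _ ≤ L' * |y - x| := h1.trans h2
    _ < (L' + 1) * (ε / (L' + 1)) := by
        apply lt_of_le_of_lt (mul_le_mul_of_nonneg_left hy2.le hL0)
        apply mul_lt_mul_of_pos_right (by linarith) (by positivity)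
    _ = ε := by field_simp



lemma barrier {f h G : ℝ → ℝ} {t₁ t C : ℝ} (ht : t₁ ≤ t)
    (hf : ContinuousOn f (Icc t₁ t))
    (hh : ContinuousOn h (Icc t₁ t)) (hG : ContinuousOn G (Icc t₁ t))
    (hG0 : ∀ s ∈ Icc t₁ t, 0 ≤ G s)
    (hint : ∀ σ ∈ Icc t₁ t, f t - f σ = ∫ s in σ..t, h s)
    (hcmp : ∀ s ∈ Icc t₁ t, C ≤ f s → h s ≤ G s)
    (hft₁ : f t₁ ≤ C) :
    f t ≤ C + ∫ s in t₁..t, G s := by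
  have hGnn : (0:ℝ) ≤ ∫ s in t₁..t, G s :=
    intervalIntegral.integral_nonneg ht (fun s hs => hG0 s hs)
  by_cases hft : f t ≤ C
  · linarith
  push_neg at hft
  set S : Set ℝ := Icc t₁ t ∩ f ⁻¹' (Iic C) with hS
  have hSsub : S ⊆ Icc t₁ t := fun s hs => hs.1
  have hSne : S.Nonempty := ⟨t₁, ⟨le_refl _, ht⟩, hft₁⟩
  have hSbdd : BddAbove S := bddAbove_Icc.mono hSsub
  have hSclosed : IsClosed S :=
    hf.preimage_isClosed_of_isClosed isClosed_Icc isClosed_Iic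
  set σ := sSup S with hσ
  have hσS : σ ∈ S := hSclosed.csSup_mem hSne hSbdd
  have hσIcc : σ ∈ Icc t₁ t := hσS.1
  have hfσ : f σ ≤ C := hσS.2
  have hσlt : σ < t := lt_of_le_of_ne hσIcc.2 (fun he => by rw [he] at hfσ; linarith)
  have hgt : ∀ s ∈ Ioc σ t, C < f s := by
    intro s hs
    by_contra hc
    push_neg at hc
    have : s ∈ S := ⟨⟨hσIcc.1.trans hs.1.le, hs.2⟩, hc⟩
    exact absurd (le_csSup hSbdd this) (not_le.mpr hs.1)
  have hge : ∀ s ∈ Icc σ t, C ≤ f s := by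
    intro s hs
    rcases eq_or_lt_of_le hs.1 with he | hl
    · haveI : (𝓝[Ioc σ t] σ).NeBot := mem_closure_iff_nhdsWithin_neBot.mp
        (by rw [closure_Ioc hσlt.ne]; exact ⟨le_refl _, hσlt.le⟩)
      have tend : Tendsto f (𝓝[Ioc σ t] σ) (𝓝 (f σ)) :=
        (hf σ hσIcc).mono (fun r hr => ⟨hσIcc.1.trans hr.1.le, hr.2⟩)
      have : C ≤ f σ := ge_of_tendsto tend
        (eventually_nhdsWithin_of_forall (fun r hr => (hgt r hr).le))
      rwa [he] at this
    · exact (hgt s ⟨hl, hs.2⟩).le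
  have hsub2 : Icc σ t ⊆ Icc t₁ t := Icc_subset_Icc hσIcc.1 le_rfl
  have hhint : IntervalIntegrable h volume σ t := by
    rw [intervalIntegrable_iff_integrableOn_Icc_of_le hσlt.le]
    exact (hh.mono hsub2).integrableOn_compact isCompact_Icc
  have hGint : IntervalIntegrable G volume σ t := by
    rw [intervalIntegrable_iff_integrableOn_Icc_of_le hσlt.le]
    exact (hG.mono hsub2).integrableOn_compact isCompact_Icc
  have hGint1 : IntervalIntegrable G volume t₁ σ := by
    rw [intervalIntegrable_iff_integrableOn_Icc_of_le hσIcc.1]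
    exact (hG.mono (Icc_subset_Icc le_rfl hσIcc.2)).integrableOn_compact isCompact_Icc
  have hmono : (∫ s in σ..t, h s) ≤ ∫ s in σ..t, G s :=
    intervalIntegral.integral_mono_on hσlt.le hhint hGint
      (fun s hs => hcmp s (hsub2 hs) (hge s hs))
  have hsplit : (∫ s in t₁..σ, G s) + (∫ s in σ..t, G s) = ∫ s in t₁..t, G s :=
    intervalIntegral.integral_add_adjacent_intervals hGint1 hGint
  have h1 : (0:ℝ) ≤ ∫ s in t₁..σ, G s :=
    intervalIntegral.integral_nonneg hσIcc.1
      (fun s hs => hG0 s ⟨hs.1, hs.2.trans hσlt.le⟩)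
  have := hint σ hσIcc
  linarith


lemma keyLemma {n : ℕ} (Ω : Set (EuclideanSpace ℝ (Fin n))) (hΩmeas : MeasurableSet Ω)
    (K : EuclideanSpace ℝ (Fin n) → EuclideanSpace ℝ (Fin n) → ℝ)
    (hKnonneg : ∀ x y, 0 ≤ K x y)
    (hKxmeas : ∀ x, Measurable (K x))
    (hKint : ∀ x ∈ Ω, IntegrableOn (K x) Ω)
    (D : ℝ) (hD : ∀ x ∈ Ω, (∫ y in Ω, K x y) ≤ D) (hD0 : 0 ≤ D)
    (q : ℝ → ℝ) (hqc : Continuous q) (L M : ℝ) (hL0 : 0 ≤ L) (hM0 : 0 ≤ M)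
    (hqabs : ∀ z : ℝ, |z| ≤ 2*M → |q z| ≤ L * |z|)
    (hqle : ∀ z : ℝ, |z| ≤ 2*M → q z ≤ L * max (-z) 0)
    (T t₁ : ℝ) (ht₁ : t₁ ∈ Icc (0:ℝ) T)
    (u : EuclideanSpace ℝ (Fin n) → ℝ → ℝ)
    (hucont : ContinuousOn (fun p : EuclideanSpace ℝ (Fin n) × ℝ => u p.1 p.2) (Ω ×ˢ Icc 0 T))
    (hubd : ∀ x ∈ Ω, ∀ t ∈ Icc (0:ℝ) T, |u x t| ≤ M)
    (c : EuclideanSpace ℝ (Fin n) → ℝ)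
    (hueq : ∀ x ∈ Ω, ∀ t ∈ Icc (0:ℝ) T,
        u x t = c x + ∫ s in (0:ℝ)..t, ∫ y in Ω, K x y * q (u x s - u y s))
    (C : ℝ) (hC : ∀ x ∈ Ω, u x t₁ ≤ C) :
    ∀ t ∈ Icc t₁ T, ∀ x ∈ Ω, u x t ≤ C := by
  -- continuity of slices
  have hux : ∀ x ∈ Ω, ContinuousOn (u x) (Icc 0 T) := by
    intro x hx
    have : ContinuousOn ((fun p : EuclideanSpace ℝ (Fin n) × ℝ => u p.1 p.2) ∘
        (fun s : ℝ => (x, s))) (Icc 0 T) :=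
      hucont.comp (Continuous.continuousOn (by fun_prop)) (fun s hs => ⟨hx, hs⟩)
    exact this
  have huy : ∀ s ∈ Icc (0:ℝ) T, ContinuousOn (fun y => u y s) Ω := by
    intro s hs
    have : ContinuousOn ((fun p : EuclideanSpace ℝ (Fin n) × ℝ => u p.1 p.2) ∘
        (fun y => (y, s))) Ω :=
      hucont.comp (Continuous.continuousOn (by fun_prop)) (fun y hy => ⟨hy, hs⟩)
    exact this
  have hFmeas : ∀ x ∈ Ω, ∀ s ∈ Icc (0:ℝ) T,
      AEStronglyMeasurable (fun y => K x y * q (u x s - u y s)) (volume.restrict Ω) := by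
    intro x hx s hs
    have h1 : ContinuousOn (fun y => q (u x s - u y s)) Ω :=
      hqc.comp_continuousOn (continuousOn_const.sub (huy s hs))
    exact ((hKxmeas x).aemeasurable.mul (h1.aemeasurable hΩmeas)).aestronglyMeasurable
  have hzbd : ∀ x ∈ Ω, ∀ y ∈ Ω, ∀ s ∈ Icc (0:ℝ) T, |u x s - u y s| ≤ 2*M := by
    intro x hx y hy s hs
    have h1 := hubd x hx s hs
    have h2 := hubd y hy s hs
    have h3 : |u x s - u y s| ≤ |u x s| + |u y s| := abs_sub _ _
    linarith
  have hFbd : ∀ x ∈ Ω, ∀ s ∈ Icc (0:ℝ) T, ∀ y ∈ Ω,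
      ‖K x y * q (u x s - u y s)‖ ≤ K x y * (L * (2*M)) := by
    intro x hx s hs y hy
    have hz := hzbd x hx y hy s hs
    calc ‖K x y * q (u x s - u y s)‖ = K x y * |q (u x s - u y s)| := by
          rw [norm_mul, Real.norm_eq_abs, Real.norm_eq_abs, abs_of_nonneg (hKnonneg x y)]
      _ ≤ K x y * (L * (2*M)) := mul_le_mul_of_nonneg_left
          ((hqabs _ hz).trans (mul_le_mul_of_nonneg_left hz hL0)) (hKnonneg x y)
  have hFint : ∀ x ∈ Ω, ∀ s ∈ Icc (0:ℝ) T,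
      IntegrableOn (fun y => K x y * q (u x s - u y s)) Ω := by
    intro x hx s hs
    refine Integrable.mono' ((hKint x hx).mul_const (L*(2*M))) (hFmeas x hx s hs) ?_
    exact (ae_restrict_iff' hΩmeas).mpr (Eventually.of_forall (fun y hy => hFbd x hx s hs y hy))
  have hhcont : ∀ x ∈ Ω,
      ContinuousOn (fun s => ∫ y in Ω, K x y * q (u x s - u y s)) (Icc 0 T) := by
    intro x hx
    apply continuousOn_of_dominated (bound := fun y => K x y * (L*(2*M)))
    · exact fun s hs => hFmeas x hx s hs
    · exact fun s hs => (ae_restrict_iff' hΩmeas).mpr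
        (Eventually.of_forall (fun y hy => hFbd x hx s hs y hy))
    · exact (hKint x hx).mul_const _
    · exact (ae_restrict_iff' hΩmeas).mpr (Eventually.of_forall (fun y hy =>
        continuousOn_const.mul (hqc.comp_continuousOn ((hux x hx).sub (hux y hy)))))
  have hhintv : ∀ x ∈ Ω, ∀ σ ∈ Icc (0:ℝ) T, ∀ t ∈ Icc (0:ℝ) T,
      u x t - u x σ = ∫ s in σ..t, ∫ y in Ω, K x y * q (u x s - u y s) := by
    intro x hx σ hσ t ht
    have i1 : IntervalIntegrable (fun s => ∫ y in Ω, K x y * q (u x s - u y s)) volume 0 t := by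
      apply ContinuousOn.intervalIntegrable
      apply (hhcont x hx).mono
      rw [uIcc_of_le ht.1]
      exact Icc_subset_Icc le_rfl ht.2
    have i2 : IntervalIntegrable (fun s => ∫ y in Ω, K x y * q (u x s - u y s)) volume 0 σ := by
      apply ContinuousOn.intervalIntegrable
      apply (hhcont x hx).mono
      rw [uIcc_of_le hσ.1]
      exact Icc_subset_Icc le_rfl hσ.2
    have hsub := intervalIntegral.integral_interval_sub_left i1 i2
    rw [hueq x hx t ht, hueq x hx σ hσ]
    rw [← hsub]; ring
  -- constants
  set Mstar : ℝ := M + |C| with hMstar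
  have hMs0 : 0 ≤ Mstar := by positivity
  have hMs : ∀ x ∈ Ω, ∀ t ∈ Icc (0:ℝ) T, u x t - C ≤ Mstar := by
    intro x hx t ht
    have h1 := hubd x hx t ht
    have h2 := abs_le.mp h1
    have h3 := neg_abs_le C
    simp only [hMstar]
    linarith [h2.2]
  -- main induction
  have main : ∀ k : ℕ, ∀ t ∈ Icc t₁ T, ∀ x ∈ Ω,
      u x t ≤ C + (Mstar * (L*D)^k / (k.factorial)) * (t - t₁)^k := by
    intro k
    induction k with
    | zero =>
      intro t ht x hx
      have htIcc : t ∈ Icc (0:ℝ) T := ⟨ht₁.1.trans ht.1, ht.2⟩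
      have := hMs x hx t htIcc
      simp only [pow_zero, Nat.factorial_zero, Nat.cast_one, mul_one, div_one]
      linarith
    | succ k ih =>
      intro t ht x hx
      have htIcc : t ∈ Icc (0:ℝ) T := ⟨ht₁.1.trans ht.1, ht.2⟩
      have hsubT : Icc t₁ t ⊆ Icc (0:ℝ) T := Icc_subset_Icc ht₁.1 htIcc.2
      set c₀ : ℝ := Mstar * (L*D)^k / (k.factorial) with hc₀
      have hc₀0 : 0 ≤ c₀ := by positivity
      have hb := barrier (f := u x)
        (h := fun s => ∫ y in Ω, K x y * q (u x s - u y s))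
        (G := fun s => (L*D) * (c₀ * (s - t₁)^k)) (t₁ := t₁) (t := t) (C := C)
        ht.1 ((hux x hx).mono hsubT) ((hhcont x hx).mono hsubT)
        (Continuous.continuousOn (by fun_prop))
        (fun s hs => mul_nonneg (mul_nonneg hL0 hD0)
          (mul_nonneg hc₀0 (pow_nonneg (by linarith [hs.1]) k)))
        (fun σ hσ => hhintv x hx σ (hsubT hσ) t htIcc)
        ?_ (hC x hx)
      · -- compute the integral
        have hcomp : (∫ s in t₁..t, (s - t₁)^k) = (t - t₁)^(k+1)/(k+1) := by
          rw [intervalIntegral.integral_comp_sub_right (fun x => x^k) t₁]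
          simp [integral_pow]
        have hval : (∫ s in t₁..t, (L*D) * (c₀ * (s - t₁)^k))
            = (L*D*c₀) * ((t - t₁)^(k+1)/(k+1)) := by
          have : (∫ s in t₁..t, (L*D) * (c₀ * (s - t₁)^k))
              = (L*D*c₀) * ∫ s in t₁..t, (s - t₁)^k := by
            rw [← intervalIntegral.integral_const_mul]
            congr 1; ext s; ring
          rw [this, hcomp]
        have hfac : ((k.factorial : ℝ)) ≠ 0 := Nat.cast_ne_zero.mpr k.factorial_ne_zero
        have heq : (L*D*c₀) * ((t - t₁)^(k+1)/(k+1))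
            = (Mstar * (L*D)^(k+1) / ((k+1).factorial)) * (t - t₁)^(k+1) := by
          rw [hc₀, Nat.factorial_succ]
          push_cast
          field_simp
          ring
        rw [hval, heq] at hb
        exact_mod_cast hb
      · -- the comparison condition
        intro s hs hCs
        have hsIcc : s ∈ Icc (0:ℝ) T := hsubT hs
        set B : ℝ := c₀ * (s - t₁)^k with hB
        have hB0 : 0 ≤ B := mul_nonneg hc₀0 (pow_nonneg (by linarith [hs.1]) k)
        have hptwise : ∀ y ∈ Ω, K x y * q (u x s - u y s) ≤ K x y * (L * B) := by
          intro y hy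
          have hz := hzbd x hx y hy s hsIcc
          have h1 : u y s ≤ C + B := by
            have := ih s ⟨hs.1, hsIcc.2⟩ y hy
            simpa [hB, hc₀] using this
          have h2 : max (-(u x s - u y s)) 0 ≤ B := max_le (by linarith) hB0
          have h3 : q (u x s - u y s) ≤ L * B :=
            (hqle _ hz).trans (mul_le_mul_of_nonneg_left h2 hL0)
          exact mul_le_mul_of_nonneg_left h3 (hKnonneg x y)
        have hint1 : (∫ y in Ω, K x y * q (u x s - u y s)) ≤ ∫ y in Ω, K x y * (L * B) :=
          setIntegral_mono_on (hFint x hx s hsIcc) ((hKint x hx).mul_const (L*B))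
            hΩmeas hptwise
        have hint2 : (∫ y in Ω, K x y * (L * B)) = (∫ y in Ω, K x y) * (L*B) :=
          integral_mul_const _ _
        have hint3 : (∫ y in Ω, K x y) * (L*B) ≤ D * (L*B) :=
          mul_le_mul_of_nonneg_right (hD x hx) (mul_nonneg hL0 hB0)
        calc (∫ y in Ω, K x y * q (u x s - u y s)) ≤ D * (L*B) := by
              rw [hint2] at hint1; exact hint1.trans hint3
          _ = (L*D) * (c₀ * (s - t₁)^k) := by rw [hB]; ring
  -- pass to the limit
  intro t ht x hx
  have hlim : Tendsto (fun k : ℕ => C + (Mstar * (L*D)^k / (k.factorial : ℝ)) * (t - t₁)^k)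
      atTop (𝓝 C) := by
    have h0 : Tendsto (fun k : ℕ => (L*D*(t - t₁))^k / (k.factorial : ℝ)) atTop (𝓝 0) :=
      FloorSemiring.tendsto_pow_div_factorial_atTop _
    have h1 : Tendsto (fun k : ℕ => C + Mstar * ((L*D*(t - t₁))^k / (k.factorial : ℝ)))
        atTop (𝓝 (C + Mstar * 0)) :=
      tendsto_const_nhds.add (h0.const_mul Mstar)
    rw [mul_zero, add_zero] at h1
    have heq2 : (fun k : ℕ => C + (Mstar * (L*D)^k / (k.factorial : ℝ)) * (t - t₁)^k)
        = fun k : ℕ => C + Mstar * ((L*D*(t - t₁))^k / (k.factorial : ℝ)) := by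
      funext k
      rw [mul_pow (L*D) (t - t₁)]
      ring
    rw [heq2]
    exact h1
  exact ge_of_tendsto' hlim (fun k => main k t ht x hx)


/-- Weak maximum principle for coordination games.  If `ρ` satisfies the
coordination condition (`ρ'(z) ≤ 0` for `z ≥ 0`, `ρ'(z) ≥ 0` for `z ≤ 0`) and `u` solves
the IVP on `Ω × [0,T]`, then `sup_{x∈Ω} |u(x,t₂)| ≤ sup_{x∈Ω} |u(x,t₁)|` for `t₁ ≤ t₂`,
and in particular `sup_{x∈Ω} |u(x,t)| ≤ sup_{x∈Ω} |u₀(x)|`. -/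
theorem statement4
    (n : ℕ) (Ω : Set (EuclideanSpace ℝ (Fin n)))
    (hΩne : Ω.Nonempty) (hΩmeas : MeasurableSet Ω)
    -- `K` is an admissible kernel:
    (K : EuclideanSpace ℝ (Fin n) → EuclideanSpace ℝ (Fin n) → ℝ)
    (hKnonneg : ∀ x y, 0 ≤ K x y)
    (hKmeas : Measurable (Function.uncurry K))
    (hKint : ∀ x ∈ Ω, IntegrableOn (K x) Ω)
    (hKcont : ∀ x ∈ Ω, ∀ ε > (0:ℝ), ∃ δ > (0:ℝ), ∀ x' ∈ Ω, dist x' x < δ →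
        (∫ y in Ω, |K x' y - K x y|) < ε)
    (D : ℝ) (hD : ∀ x ∈ Ω, (∫ y in Ω, K x y) ≤ D)
    -- `ρ` is a recognition function satisfying the coordination condition:
    (ρ : ℝ → ℝ) (hρ : Differentiable ℝ ρ)
    (hρ'lip : ∀ R : ℝ, 0 < R → ∃ L : ℝ, ∀ a b : ℝ, |a| ≤ R → |b| ≤ R →
        |deriv ρ a - deriv ρ b| ≤ L * |a - b|)
    (hcoord_pos : ∀ z : ℝ, 0 ≤ z → deriv ρ z ≤ 0)
    (hcoord_neg : ∀ z : ℝ, z ≤ 0 → 0 ≤ deriv ρ z)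
    -- `u₀` bounded and continuous on `Ω`:
    (u₀ : EuclideanSpace ℝ (Fin n) → ℝ)
    (hu₀cont : ContinuousOn u₀ Ω) (M₀ : ℝ) (hu₀bd : ∀ x ∈ Ω, |u₀ x| ≤ M₀)
    -- `u` solves the IVP on `Ω × [0,T]`:
    (T : ℝ) (hT : 0 < T)
    (u : EuclideanSpace ℝ (Fin n) → ℝ → ℝ)
    (hucont : ContinuousOn (fun p : EuclideanSpace ℝ (Fin n) × ℝ => u p.1 p.2) (Ω ×ˢ Icc 0 T))
    (hubd : ∃ M : ℝ, ∀ x ∈ Ω, ∀ t ∈ Icc (0:ℝ) T, |u x t| ≤ M)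
    (hueq : ∀ x ∈ Ω, ∀ t ∈ Icc (0:ℝ) T,
        u x t = u₀ x + ∫ s in (0:ℝ)..t, ∫ y in Ω, K x y * deriv ρ (u x s - u y s)) :
    (∀ t₁ ∈ Icc (0:ℝ) T, ∀ t₂ ∈ Icc (0:ℝ) T, t₁ ≤ t₂ →
      (⨆ x : Ω, |u x.1 t₂|) ≤ ⨆ x : Ω, |u x.1 t₁|) ∧
    (∀ t ∈ Icc (0:ℝ) T, (⨆ x : Ω, |u x.1 t|) ≤ ⨆ x : Ω, |u₀ x.1|) := by
  obtain ⟨M, hM⟩ := hubd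
  obtain ⟨x₀, hx₀⟩ := hΩne
  have h0T : (0:ℝ) ∈ Icc (0:ℝ) T := ⟨le_rfl, hT.le⟩
  have hM0 : 0 ≤ M := (abs_nonneg _).trans (hM x₀ hx₀ 0 h0T)
  have hD0 : 0 ≤ D :=
    le_trans (setIntegral_nonneg hΩmeas (fun y _ => hKnonneg x₀ y)) (hD x₀ hx₀)
  have hqc : Continuous (deriv ρ) := lipCont hρ'lip
  have hq0 : deriv ρ 0 = 0 := le_antisymm (hcoord_pos 0 le_rfl) (hcoord_neg 0 le_rfl)
  obtain ⟨L₀, hL₀⟩ := hρ'lip (2*M+1) (by linarith)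
  set L : ℝ := max L₀ 0 with hLdef
  have hL0 : 0 ≤ L := le_max_right _ _
  have hqabs : ∀ z : ℝ, |z| ≤ 2*M → |deriv ρ z| ≤ L * |z| := by
    intro z hz
    have h1 := hL₀ z 0 (by linarith) (by simp; linarith)
    rw [hq0, sub_zero, sub_zero] at h1
    exact h1.trans (mul_le_mul_of_nonneg_right (le_max_left _ _) (abs_nonneg _))
  have hqle : ∀ z : ℝ, |z| ≤ 2*M → deriv ρ z ≤ L * max (-z) 0 := by
    intro z hz
    rcases le_total 0 z with h | h
    · exact (hcoord_pos z h).trans (mul_nonneg hL0 (le_max_right _ _))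
    · have h1 := hqabs z hz
      have h2 : deriv ρ z ≤ |deriv ρ z| := le_abs_self _
      have h3 : |z| = -z := abs_of_nonpos h
      have h4 : max (-z) 0 = -z := max_eq_left (by linarith)
      rw [h3] at h1; rw [h4]; linarith
  set q₂ : ℝ → ℝ := fun z => -(deriv ρ (-z)) with hq₂def
  have hq₂c : Continuous q₂ := (hqc.comp continuous_neg).neg
  have hq₂abs : ∀ z : ℝ, |z| ≤ 2*M → |q₂ z| ≤ L * |z| := by
    intro z hz
    have : |q₂ z| = |deriv ρ (-z)| := abs_neg _
    rw [this]
    have hz' : |(-z)| ≤ 2*M := by rwa [abs_neg]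
    have := hqabs (-z) hz'
    rwa [abs_neg] at this
  have hq₂le : ∀ z : ℝ, |z| ≤ 2*M → q₂ z ≤ L * max (-z) 0 := by
    intro z hz
    rcases le_total 0 z with h | h
    · have h1 : 0 ≤ deriv ρ (-z) := hcoord_neg (-z) (by linarith)
      have : q₂ z ≤ 0 := by simp only [hq₂def]; linarith
      exact this.trans (mul_nonneg hL0 (le_max_right _ _))
    · have h1 := hq₂abs z hz
      have h2 : q₂ z ≤ |q₂ z| := le_abs_self _
      have h3 : |z| = -z := abs_of_nonpos h
      have h4 : max (-z) 0 = -z := max_eq_left (by linarith)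
      rw [h3] at h1; rw [h4]; linarith
  have hKxmeas : ∀ x, Measurable (K x) := fun x => hKmeas.comp measurable_prodMk_left
  haveI : Nonempty ↥Ω := ⟨⟨x₀, hx₀⟩⟩
  -- the integral equation for `-u`
  have hveq : ∀ x ∈ Ω, ∀ t ∈ Icc (0:ℝ) T,
      (fun x t => -(u x t)) x t = (fun x => -(u₀ x)) x +
        ∫ s in (0:ℝ)..t, ∫ y in Ω, K x y *
          q₂ ((fun x t => -(u x t)) x s - (fun x t => -(u x t)) y s) := by
    intro x hx t ht
    have hinner : ∀ s : ℝ, (∫ y in Ω, K x y * q₂ (-(u x s) - -(u y s)))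
        = -∫ y in Ω, K x y * deriv ρ (u x s - u y s) := by
      intro s
      rw [← integral_neg]
      congr 1
      funext y
      have harg : -(-(u x s) - -(u y s)) = u x s - u y s := by ring
      show K x y * -(deriv ρ (-(-(u x s) - -(u y s)))) = -(K x y * deriv ρ (u x s - u y s))
      rw [harg]; ring
    show -(u x t) = -(u₀ x) + ∫ s in (0:ℝ)..t, ∫ y in Ω, K x y * q₂ (-(u x s) - -(u y s))
    rw [show (fun s => ∫ y in Ω, K x y * q₂ (-(u x s) - -(u y s)))
        = fun s => -(∫ y in Ω, K x y * deriv ρ (u x s - u y s)) from funext hinner]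
    rw [intervalIntegral.integral_neg, hueq x hx t ht]
    ring
  have hvbd : ∀ x ∈ Ω, ∀ t ∈ Icc (0:ℝ) T, |(fun x t => -(u x t)) x t| ≤ M := by
    intro x hx t ht
    show |(-(u x t))| ≤ M
    rw [abs_neg]; exact hM x hx t ht
  have hvcont : ContinuousOn
      (fun p : EuclideanSpace ℝ (Fin n) × ℝ => (fun x t => -(u x t)) p.1 p.2)
      (Ω ×ˢ Icc 0 T) := hucont.neg
  have part1 : ∀ t₁ ∈ Icc (0:ℝ) T, ∀ t₂ ∈ Icc (0:ℝ) T, t₁ ≤ t₂ →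
      (⨆ x : Ω, |u x.1 t₂|) ≤ ⨆ x : Ω, |u x.1 t₁| := by
    intro t₁ ht₁ t₂ ht₂ h12
    set C : ℝ := ⨆ x : Ω, |u x.1 t₁| with hCdef
    have hbdd : BddAbove (range fun x : Ω => |u x.1 t₁|) := by
      refine ⟨M, ?_⟩
      rintro _ ⟨x, rfl⟩
      exact hM x.1 x.2 t₁ ht₁
    have hCub : ∀ x ∈ Ω, |u x t₁| ≤ C := fun x hx => le_ciSup hbdd ⟨x, hx⟩
    have hC1 : ∀ x ∈ Ω, u x t₁ ≤ C := fun x hx => (le_abs_self _).trans (hCub x hx)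
    have hC2 : ∀ x ∈ Ω, (fun x t => -(u x t)) x t₁ ≤ C := fun x hx =>
      (neg_le_abs _).trans (hCub x hx)
    have up := keyLemma Ω hΩmeas K hKnonneg hKxmeas hKint D hD hD0 (deriv ρ) hqc L M
      hL0 hM0 hqabs hqle T t₁ ht₁ u hucont hM u₀ hueq C hC1 t₂ ⟨h12, ht₂.2⟩
    have low := keyLemma Ω hΩmeas K hKnonneg hKxmeas hKint D hD hD0 q₂ hq₂c L M
      hL0 hM0 hq₂abs hq₂le T t₁ ht₁ (fun x t => -(u x t)) hvcont hvbd
      (fun x => -(u₀ x)) hveq C hC2 t₂ ⟨h12, ht₂.2⟩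
    refine ciSup_le (fun x => ?_)
    have h1 := up x.1 x.2
    have h2 : -(u x.1 t₂) ≤ C := low x.1 x.2
    exact abs_le.mpr ⟨by linarith, h1⟩
  refine ⟨part1, ?_⟩
  intro t ht
  have hu0 : ∀ x ∈ Ω, u x 0 = u₀ x := by
    intro x hx
    have := hueq x hx 0 h0T
    simpa using this
  have h1 := part1 0 h0T t ht ht.1
  have heqsup : (⨆ x : Ω, |u x.1 0|) = ⨆ x : Ω, |u₀ x.1| := by
    congr 1
    funext x
    rw [hu0 x.1 x.2]
  rwa [heqsup] at h1
end

section
/- Let Ω ⊆ ℝⁿ be a nonempty measurable set, K an admissible kernel, ρ a recognition function satisfying the coordination condition, and u₀ : Ω → ℝ bounded continuous. Then for every T > 0 there exists exactly one bounded continuous u : Ω × [0,T] → ℝ satisfying u(x,t) = u₀(x) + ∫₀ᵗ g[u](x,s) ds for all (x,t) ∈ Ω × [0,T]; i.e., the initial value problem has a unique continuous bounded solution on every finite time interval. -/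
/-!
Clamping the argument of `ρ'` outside `[-2M₀, 2M₀]` makes the interaction globally Lipschitz.
For the clamped equation the Picard map `u ↦ u₀ + ∫₀ᵗ g[u]` on bounded continuous functions on
`Ω × [0, T]` satisfies a Volterra estimate: its `N`-th iterate is Lipschitz with constant
`(2DLT)ᴺ / N!`, so some iterate is a contraction and the map has a unique fixed point.

The coordination condition gives a maximum principle: if `u(·, s) ≤ B`, then
`g[u](x, s) ≤ D L (B - u(x, s))`. Hence over a time step `h` the supremum of `u` rises by
`O(h²)` only; splitting `[0, t]` into `m` steps, it rises by `O(t² / m)`, i.e. not at all.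
Dually the infimum cannot fall. So every bounded solution, of the clamped or of the original
equation, stays in `[-M₀, M₀]`, where the clamp changes nothing: both equations have the same
bounded solutions.
-/

open MeasureTheory Set

open Filter Topology
open scoped BoundedContinuousFunction

noncomputable section

namespace NonlocalCoordination

section MaximumPrinciple

variable {ι : Type*} {T c C : ℝ} {ψ G : ι → ℝ → ℝ}

lemma le_add_mul_sq_of_forall_le (hc : 0 ≤ c)
    (hψ : ∀ i, ∀ t ∈ Icc 0 T, ψ i t = ψ i 0 + ∫ s in (0:ℝ)..t, G i s)
    (hG : ∀ i, IntervalIntegrable (G i) volume 0 T)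
    (hGC : ∀ i, ∀ s ∈ Icc 0 T, |G i s| ≤ C)
    (hGle : ∀ i, ∀ s ∈ Icc 0 T, ∀ B, (∀ j, ψ j s ≤ B) → G i s ≤ c * (B - ψ i s))
    {a b A : ℝ} (ha : 0 ≤ a) (hab : a ≤ b) (hb : b ≤ T) (hA : ∀ j, ψ j a ≤ A) (i : ι) :
    ψ i b ≤ A + 2 * c * C * (b - a) ^ 2 := by
  have hGi : ∀ j, ∀ a' b', 0 ≤ a' → a' ≤ b' → b' ≤ T → IntervalIntegrable (G j) volume a' b' :=
    fun j a' b' ha' hab' hb' => (hG j).mono_set (uIcc_subset_uIcc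
      (mem_uIcc_of_le ha' (hab'.trans hb')) (mem_uIcc_of_le (ha'.trans hab') hb'))
  have hdiff : ∀ j, ∀ a' b', 0 ≤ a' → a' ≤ b' → b' ≤ T →
      ψ j b' - ψ j a' = ∫ s in a'..b', G j s := fun j a' b' ha' hab' hb' => by
    rw [hψ j b' ⟨ha'.trans hab', hb'⟩, hψ j a' ⟨ha', hab'.trans hb'⟩, add_sub_add_left_eq_sub,
      intervalIntegral.integral_interval_sub_left (hGi j 0 b' le_rfl (ha'.trans hab') hb')
        (hGi j 0 a' le_rfl ha' (hab'.trans hb'))]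
  have hlip : ∀ j, ∀ a' b', 0 ≤ a' → a' ≤ b' → b' ≤ T → |ψ j b' - ψ j a'| ≤ C * (b' - a') :=
    fun j a' b' ha' hab' hb' => by
      rw [hdiff j a' b' ha' hab' hb', ← abs_of_nonneg (sub_nonneg.2 hab')]
      refine intervalIntegral.norm_integral_le_of_norm_le_const (f := G j) fun s hs => hGC j s ?_
      rw [uIoc_of_le hab'] at hs
      exact ⟨ha'.trans hs.1.le, hs.2.trans hb'⟩
  have hC : 0 ≤ C := (abs_nonneg _).trans (hGC i a ⟨ha, hab.trans hb⟩)
  have hG' : ∀ s ∈ Icc a b, G i s ≤ c * (A - ψ i b + 2 * C * (b - a)) := fun s hs => by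
    have hB : ∀ j, ψ j s ≤ A + C * (b - a) := fun j => by
      have := (abs_le.1 (hlip j a s ha hs.1 (hs.2.trans hb))).2
      nlinarith [hA j, hs.2]
    have := (abs_le.1 (hlip i s b (ha.trans hs.1) hs.2 hb)).2
    calc G i s ≤ c * (A + C * (b - a) - ψ i s) := hGle i s ⟨ha.trans hs.1, hs.2.trans hb⟩ _ hB
      _ ≤ c * (A - ψ i b + 2 * C * (b - a)) := by gcongr; nlinarith [hs.1]
  have hstep : ψ i b - ψ i a ≤ (b - a) * (c * (A - ψ i b + 2 * C * (b - a))) := by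
    rw [hdiff i a b ha hab hb]
    refine (intervalIntegral.integral_mono_on hab (hGi i a b ha hab hb) intervalIntegrable_const
      hG').trans_eq ?_
    rw [intervalIntegral.integral_const, smul_eq_mul]
  have := hA i
  rcases le_or_gt (ψ i b) A with h | h
  · have : 0 ≤ 2 * c * C * (b - a) ^ 2 := by positivity
    linarith
  · nlinarith [mul_nonneg (mul_nonneg hc (sub_nonneg.2 hab)) (sub_nonneg.2 h.le)]

lemma le_of_initial_le (hc : 0 ≤ c)
    (hψ : ∀ i, ∀ t ∈ Icc 0 T, ψ i t = ψ i 0 + ∫ s in (0:ℝ)..t, G i s)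
    (hG : ∀ i, IntervalIntegrable (G i) volume 0 T)
    (hGC : ∀ i, ∀ s ∈ Icc 0 T, |G i s| ≤ C)
    (hGle : ∀ i, ∀ s ∈ Icc 0 T, ∀ B, (∀ j, ψ j s ≤ B) → G i s ≤ c * (B - ψ i s))
    {A : ℝ} (h₀ : ∀ i, ψ i 0 ≤ A) (i : ι) {t : ℝ} (ht : t ∈ Icc 0 T) : ψ i t ≤ A := by
  have hpart : ∀ m : ℕ, ∀ l ≤ m, ∀ j, ψ j (l * (t / m)) ≤ A + l * (2 * c * C * (t / m) ^ 2) := by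
    intro m l
    induction l with
    | zero => intro _ j; simpa using h₀ j
    | succ l ih =>
      intro hl j
      have hm : (l + 1 : ℝ) ≤ m := by exact_mod_cast hl
      have hm0 : (0 : ℝ) < m := Nat.cast_pos.2 (by omega)
      have hh : 0 ≤ t / m := div_nonneg ht.1 hm0.le
      have hle : (l + 1 : ℝ) * (t / m) ≤ t :=
        calc (l + 1 : ℝ) * (t / m) ≤ m * (t / m) := by gcongr
          _ = t := mul_div_cancel₀ t hm0.ne'
      have := le_add_mul_sq_of_forall_le (a := l * (t / m)) (b := (l + 1) * (t / m)) hc hψ hG hGC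
        hGle (by positivity) (by nlinarith) (hle.trans ht.2) (ih (Nat.le_of_succ_le hl)) j
      rw [show ((l : ℝ) + 1) * (t / m) - l * (t / m) = t / m by ring] at this
      push_cast
      linarith
  have hlim : Tendsto (fun m : ℕ => A + 2 * c * C * t ^ 2 / m) atTop (𝓝 A) := by
    simpa using (tendsto_const_nhds (x := A)).add
      (tendsto_const_div_atTop_nhds_zero_nat (2 * c * C * t ^ 2))
  refine ge_of_tendsto hlim (eventually_atTop.2 ⟨1, fun m hm => ?_⟩)
  have hm : (m : ℝ) ≠ 0 := by positivity
  have ht' : (m : ℝ) * (t / m) = t := by field_simp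
  have hC' : (m : ℝ) * (2 * c * C * (t / m) ^ 2) = 2 * c * C * t ^ 2 / m := by field_simp
  simpa only [ht', hC'] using hpart m m le_rfl i

lemma abs_le_of_initial_abs_le (hc : 0 ≤ c)
    (hψ : ∀ i, ∀ t ∈ Icc 0 T, ψ i t = ψ i 0 + ∫ s in (0:ℝ)..t, G i s)
    (hG : ∀ i, IntervalIntegrable (G i) volume 0 T)
    (hGC : ∀ i, ∀ s ∈ Icc 0 T, |G i s| ≤ C)
    (hGle : ∀ i, ∀ s ∈ Icc 0 T, ∀ B, (∀ j, ψ j s ≤ B) → G i s ≤ c * (B - ψ i s))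
    (hGge : ∀ i, ∀ s ∈ Icc 0 T, ∀ B, (∀ j, B ≤ ψ j s) → c * (B - ψ i s) ≤ G i s)
    {A : ℝ} (h₀ : ∀ i, |ψ i 0| ≤ A) (i : ι) {t : ℝ} (ht : t ∈ Icc 0 T) : |ψ i t| ≤ A := by
  have hneg := le_of_initial_le (ψ := fun i t => -ψ i t) (G := fun i s => -G i s) hc
    (fun i t ht => by simp only [intervalIntegral.integral_neg, hψ i t ht]; ring)
    (fun i => (hG i).neg) (fun i s hs => (abs_neg (G i s)).trans_le (hGC i s hs))
    (fun i s hs B hB => by linarith [hGge i s hs (-B) fun j => neg_le.1 (hB j)])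
    (fun i => neg_le.1 (abs_le.1 (h₀ i)).1) i ht
  exact abs_le.2 ⟨by linarith,
    le_of_initial_le hc hψ hG hGC hGle (fun i => (abs_le.1 (h₀ i)).2) i ht⟩

end MaximumPrinciple

section Lipschitz

variable {X : Type*} [TopologicalSpace X] {τ : ℝ → ℝ} {L : NNReal}

lemma abs_le_mul_abs_of_lipschitzWith (hτ : LipschitzWith L τ) (hτ0 : τ 0 = 0) (z : ℝ) :
    |τ z| ≤ L * |z| := by
  simpa [hτ0, Real.dist_eq] using hτ.dist_le_mul z 0

lemma abs_comp_sub_le (hτ : LipschitzWith L τ) (hτ0 : τ 0 = 0) (w : X →ᵇ ℝ) (x y : X) :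
    |τ (w x - w y)| ≤ 2 * L * ‖w‖ :=
  calc |τ (w x - w y)| ≤ L * dist (w x) (w y) := abs_le_mul_abs_of_lipschitzWith hτ hτ0 _
    _ ≤ L * (2 * ‖w‖) := by gcongr; exact w.dist_le_two_norm x y
    _ = 2 * L * ‖w‖ := by ring

end Lipschitz

section Slice

variable {X : Type*} [TopologicalSpace X] {T : ℝ}

-- Times `s ∈ ℝ` are projected onto `[0, T]`, so that time integrals are interval integrals.
def slice (hT : 0 ≤ T) (W : (X × Icc (0:ℝ) T) →ᵇ ℝ) (s : ℝ) : X →ᵇ ℝ :=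
  W.compContinuous ⟨fun x => (x, projIcc 0 T hT s), by fun_prop⟩

@[simp]
lemma slice_apply (hT : 0 ≤ T) (W : (X × Icc (0:ℝ) T) →ᵇ ℝ) (s : ℝ) (x : X) :
    slice hT W s x = W (x, projIcc 0 T hT s) := rfl

lemma norm_slice_le (hT : 0 ≤ T) (W : (X × Icc (0:ℝ) T) →ᵇ ℝ) (s : ℝ) :
    ‖slice hT W s‖ ≤ ‖W‖ :=
  W.norm_compContinuous_le _

theorem existsUnique_isFixedPt_of_volterra (hT : 0 ≤ T) {c : ℝ} (hc : 0 ≤ c)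
    (Φ : ((X × Icc (0:ℝ) T) →ᵇ ℝ) → (X × Icc (0:ℝ) T) →ᵇ ℝ)
    (hΦ : ∀ W V a (N : ℕ), (∀ p, |W p - V p| ≤ a * (p.2 : ℝ) ^ N) →
      ∀ p, |Φ W p - Φ V p| ≤ c * a * (p.2 : ℝ) ^ (N + 1) / (N + 1)) :
    ∃! W, Φ W = W := by
  have hiter : ∀ (N : ℕ) W V p,
      |Φ^[N] W p - Φ^[N] V p| ≤ dist W V * c ^ N / N.factorial * (p.2 : ℝ) ^ N := by
    intro N
    induction N with
    | zero => intro W V p; simpa [← Real.dist_eq] using W.dist_coe_le_dist p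
    | succ N ih =>
      intro W V p
      rw [Function.iterate_succ_apply', Function.iterate_succ_apply']
      refine (hΦ _ _ _ N (ih W V) p).trans (le_of_eq ?_)
      rw [Nat.factorial_succ]
      push_cast
      field_simp
      ring
  obtain ⟨N, hN⟩ : ∃ N : ℕ, (c * T) ^ N / N.factorial < 1 :=
    ((FloorSemiring.tendsto_pow_div_factorial_atTop (c * T)).eventually
      (gt_mem_nhds one_pos)).exists
  have hcontr : ContractingWith ((c * T) ^ N / N.factorial).toNNReal Φ^[N] := by
    refine ⟨Real.toNNReal_lt_one.2 hN, LipschitzWith.of_dist_le' fun W V =>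
      (BoundedContinuousFunction.dist_le (by positivity)).2 fun p => ?_⟩
    rw [Real.dist_eq]
    calc |Φ^[N] W p - Φ^[N] V p| ≤ dist W V * c ^ N / N.factorial * (p.2 : ℝ) ^ N := hiter N W V p
      _ ≤ dist W V * c ^ N / N.factorial * T ^ N := by gcongr; exacts [p.2.2.1, p.2.2.2]
      _ = (c * T) ^ N / N.factorial * dist W V := by ring
  have : Nonempty ((X × Icc (0:ℝ) T) →ᵇ ℝ) := ⟨0⟩
  exact ⟨_, hcontr.isFixedPt_fixedPoint_iterate, fun V hV =>
    hcontr.fixedPoint_unique' (Function.IsFixedPt.iterate hV N) (hcontr.fixedPoint_isFixedPt)⟩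

end Slice

variable {X : Type*} [TopologicalSpace X] [MeasurableSpace X] {μ : Measure X} {k : X → X → ℝ}
  {D : ℝ} {τ : ℝ → ℝ} {L : NNReal} {T : ℝ}

-- The last field is the continuity of `x ↦ k x ·` into `L¹(μ)`.
structure IsAdmissibleKernel (μ : Measure X) (k : X → X → ℝ) (D : ℝ) : Prop where
  nonneg : ∀ x y, 0 ≤ k x y
  integrable : ∀ x, Integrable (k x) μ
  integral_le : ∀ x, ∫ y, k x y ∂μ ≤ D
  tendsto_integral_abs_sub : ∀ x, Tendsto (fun x' => ∫ y, |k x' y - k x y| ∂μ) (𝓝 x) (𝓝 0)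

namespace IsAdmissibleKernel

lemma bound_nonneg (hK : IsAdmissibleKernel μ k D) (x : X) : 0 ≤ D :=
  (integral_nonneg (hK.nonneg x)).trans (hK.integral_le x)

lemma integral_mul_le (hK : IsAdmissibleKernel μ k D) (x : X) {f : X → ℝ}
    (hf : Integrable (fun y => k x y * f y) μ) {c : ℝ} (hc : 0 ≤ c) (hfc : ∀ y, f y ≤ c) :
    ∫ y, k x y * f y ∂μ ≤ D * c :=
  calc ∫ y, k x y * f y ∂μ ≤ ∫ y, k x y * c ∂μ :=
        integral_mono hf ((hK.integrable x).mul_const c)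
          fun y => mul_le_mul_of_nonneg_left (hfc y) (hK.nonneg x y)
    _ = (∫ y, k x y ∂μ) * c := integral_mul_const c _
    _ ≤ D * c := mul_le_mul_of_nonneg_right (hK.integral_le x) hc

lemma abs_integral_mul_le (hK : IsAdmissibleKernel μ k D) (x : X) {f : X → ℝ} {c : ℝ}
    (hfc : ∀ y, |f y| ≤ c) : |∫ y, k x y * f y ∂μ| ≤ D * c := by
  have hc : 0 ≤ c := (abs_nonneg _).trans (hfc x)
  have hbound : ∀ y, ‖k x y * f y‖ ≤ k x y * c := fun y => by
    rw [norm_mul, Real.norm_of_nonneg (hK.nonneg x y), Real.norm_eq_abs]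
    exact mul_le_mul_of_nonneg_left (hfc y) (hK.nonneg x y)
  calc |∫ y, k x y * f y ∂μ| ≤ ∫ y, k x y * c ∂μ :=
        norm_integral_le_of_norm_le ((hK.integrable x).mul_const c) (.of_forall hbound)
    _ ≤ D * c := hK.integral_mul_le x ((hK.integrable x).mul_const c) hc fun _ => le_rfl

end IsAdmissibleKernel

-- `g[u](x, t)` of the paper is `nonlocal μ k ρ' (u(·, t)) x`.
def nonlocal (μ : Measure X) (k : X → X → ℝ) (τ : ℝ → ℝ) (w : X → ℝ) (x : X) : ℝ :=
  ∫ y, k x y * τ (w x - w y) ∂μ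

lemma abs_nonlocal_le (hK : IsAdmissibleKernel μ k D) (hτ : LipschitzWith L τ) (hτ0 : τ 0 = 0)
    (w : X →ᵇ ℝ) (x : X) : |nonlocal μ k τ w x| ≤ D * (2 * L * ‖w‖) :=
  hK.abs_integral_mul_le x (abs_comp_sub_le hτ hτ0 w x)

lemma abs_nonlocal_slice_le (hK : IsAdmissibleKernel μ k D) (hτ : LipschitzWith L τ)
    (hτ0 : τ 0 = 0) (hT : 0 ≤ T) (W : (X × Icc (0:ℝ) T) →ᵇ ℝ) (s : ℝ) (x : X) :
    |nonlocal μ k τ (slice hT W s) x| ≤ D * (2 * L * ‖W‖) := by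
  refine (abs_nonlocal_le hK hτ hτ0 _ x).trans ?_
  have := hK.bound_nonneg x
  gcongr
  exact norm_slice_le hT W s

def picardFun (μ : Measure X) (k : X → X → ℝ) (τ : ℝ → ℝ) (u₀ : X → ℝ) (hT : 0 ≤ T)
    (W : (X × Icc (0:ℝ) T) →ᵇ ℝ) (p : X × Icc (0:ℝ) T) : ℝ :=
  u₀ p.1 + ∫ s in (0:ℝ)..p.2, nonlocal μ k τ (slice hT W s) p.1

lemma norm_picardFun_le (hK : IsAdmissibleKernel μ k D) (hτ : LipschitzWith L τ) (hτ0 : τ 0 = 0)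
    (u₀ : X →ᵇ ℝ) (hT : 0 ≤ T) (W : (X × Icc (0:ℝ) T) →ᵇ ℝ) (p : X × Icc (0:ℝ) T) :
    ‖picardFun μ k τ u₀ hT W p‖ ≤ ‖u₀‖ + D * (2 * L * ‖W‖) * T := by
  have hp : |(p.2 : ℝ) - 0| ≤ T := by rw [sub_zero, abs_of_nonneg p.2.2.1]; exact p.2.2.2
  refine (norm_add_le _ _).trans (add_le_add (u₀.norm_coe_le_norm _) ?_)
  refine (intervalIntegral.norm_integral_le_of_norm_le_const fun s _ =>
    abs_nonlocal_slice_le hK hτ hτ0 hT W s p.1).trans ?_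
  have := hK.bound_nonneg p.1
  gcongr

lemma picardFun_congr {τ₁ τ₂ : ℝ → ℝ} (u₀ : X → ℝ) (hT : 0 ≤ T) {W : (X × Icc (0:ℝ) T) →ᵇ ℝ}
    {M : ℝ} (hW : ∀ p, |W p| ≤ M) (hτ : ∀ z, |z| ≤ 2 * M → τ₁ z = τ₂ z) :
    picardFun μ k τ₁ u₀ hT W = picardFun μ k τ₂ u₀ hT W := by
  funext p
  refine congrArg (u₀ p.1 + ·) (intervalIntegral.integral_congr fun s _ =>
    integral_congr_ae (.of_forall fun y => ?_))
  simp only [slice_apply]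
  rw [hτ _ ((abs_sub _ _).trans
    (by linarith [hW (p.1, projIcc 0 T hT s), hW (y, projIcc 0 T hT s)]))]

variable [OpensMeasurableSpace X]

lemma integrable_mul_of_abs_le {g f : X → ℝ} (hg : Integrable g μ) (hf : Continuous f) {c : ℝ}
    (hfc : ∀ y, |f y| ≤ c) : Integrable (fun y => g y * f y) μ :=
  hg.mul_bdd hf.aestronglyMeasurable (.of_forall fun y => (Real.norm_eq_abs _).trans_le (hfc y))

lemma integrable_mul_comp_sub (hK : IsAdmissibleKernel μ k D) (hτ : LipschitzWith L τ)
    (hτ0 : τ 0 = 0) (w : X →ᵇ ℝ) (x : X) :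
    Integrable (fun y => k x y * τ (w x - w y)) μ :=
  integrable_mul_of_abs_le (hK.integrable x) (hτ.continuous.comp (by fun_prop))
    (abs_comp_sub_le hτ hτ0 w x)

lemma abs_nonlocal_sub_nonlocal_le (hK : IsAdmissibleKernel μ k D) (hτ : LipschitzWith L τ)
    (hτ0 : τ 0 = 0) {w v : X →ᵇ ℝ} {δ : ℝ} (hδ : ∀ y, |w y - v y| ≤ δ) (x : X) :
    |nonlocal μ k τ w x - nonlocal μ k τ v x| ≤ D * (2 * L * δ) := by
  rw [nonlocal, nonlocal, ← integral_sub (integrable_mul_comp_sub hK hτ hτ0 w x)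
    (integrable_mul_comp_sub hK hτ hτ0 v x)]
  simp_rw [← mul_sub]
  refine hK.abs_integral_mul_le x fun y => ?_
  calc |τ (w x - w y) - τ (v x - v y)| ≤ L * |(w x - w y) - (v x - v y)| := by
        simpa only [Real.dist_eq] using hτ.dist_le_mul _ _
    _ = L * |(w x - v x) - (w y - v y)| := by ring_nf
    _ ≤ L * (δ + δ) := by gcongr; exact (abs_sub _ _).trans (add_le_add (hδ x) (hδ y))
    _ = 2 * L * δ := by ring

lemma abs_nonlocal_apply_sub_le (hK : IsAdmissibleKernel μ k D) (hτ : LipschitzWith L τ)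
    (hτ0 : τ 0 = 0) (w : X →ᵇ ℝ) (x x' : X) :
    |nonlocal μ k τ w x' - nonlocal μ k τ w x| ≤
      (∫ y, |k x' y - k x y| ∂μ) * (2 * L * ‖w‖) + D * (L * |w x' - w x|) := by
  have hτc := hτ.continuous
  have hint₁ : Integrable (fun y => (k x' y - k x y) * τ (w x' - w y)) μ :=
    integrable_mul_of_abs_le ((hK.integrable x').sub (hK.integrable x)) (by fun_prop)
      (abs_comp_sub_le hτ hτ0 w x')
  have hint₂ : Integrable (fun y => k x y * (τ (w x' - w y) - τ (w x - w y))) μ :=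
    integrable_mul_of_abs_le (hK.integrable x) (by fun_prop) fun y => (abs_sub _ _).trans
      (add_le_add (abs_comp_sub_le hτ hτ0 w x' y) (abs_comp_sub_le hτ hτ0 w x y))
  have hsplit : nonlocal μ k τ w x' - nonlocal μ k τ w x =
      (∫ y, (k x' y - k x y) * τ (w x' - w y) ∂μ) +
        ∫ y, k x y * (τ (w x' - w y) - τ (w x - w y)) ∂μ := by
    rw [nonlocal, nonlocal, ← integral_sub (integrable_mul_comp_sub hK hτ hτ0 w x')
      (integrable_mul_comp_sub hK hτ hτ0 w x), ← integral_add hint₁ hint₂]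
    congr 1; ext y; ring
  rw [hsplit]
  refine (abs_add_le _ _).trans (add_le_add ?_ ?_)
  · have hint₃ : Integrable (fun y => |k x' y - k x y| * (2 * L * ‖w‖)) μ :=
      ((hK.integrable x').sub (hK.integrable x)).abs.mul_const _
    calc |∫ y, (k x' y - k x y) * τ (w x' - w y) ∂μ|
        ≤ ∫ y, |k x' y - k x y| * (2 * L * ‖w‖) ∂μ :=
          norm_integral_le_of_norm_le (f := fun y => (k x' y - k x y) * τ (w x' - w y)) hint₃
            (.of_forall fun y => by
            rw [norm_mul, Real.norm_eq_abs, Real.norm_eq_abs]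
            exact mul_le_mul_of_nonneg_left (abs_comp_sub_le hτ hτ0 w x' y) (abs_nonneg _))
      _ = (∫ y, |k x' y - k x y| ∂μ) * (2 * L * ‖w‖) := integral_mul_const _ _
  · exact hK.abs_integral_mul_le x fun y => by
      simpa [Real.dist_eq] using hτ.dist_le_mul (w x' - w y) (w x - w y)

lemma continuous_nonlocal (hK : IsAdmissibleKernel μ k D) (hτ : LipschitzWith L τ)
    (hτ0 : τ 0 = 0) (w : X →ᵇ ℝ) : Continuous (nonlocal μ k τ w) := by
  refine continuous_iff_continuousAt.2 fun x => tendsto_iff_dist_tendsto_zero.2 ?_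
  have hbound : Tendsto (fun x' => (∫ y, |k x' y - k x y| ∂μ) * (2 * L * ‖w‖) +
      D * (L * dist (w x') (w x))) (𝓝 x) (𝓝 (0 * (2 * L * ‖w‖) + D * (L * 0))) :=
    ((hK.tendsto_integral_abs_sub x).mul_const _).add (tendsto_const_nhds.mul
      (tendsto_const_nhds.mul (tendsto_iff_dist_tendsto_zero.1 (w.continuous.tendsto x))))
  rw [zero_mul, mul_zero, mul_zero, add_zero] at hbound
  exact squeeze_zero (fun _ => dist_nonneg) (fun x' => by
    simpa only [Real.dist_eq] using abs_nonlocal_apply_sub_le hK hτ hτ0 w x x') hbound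

lemma nonlocal_le (hK : IsAdmissibleKernel μ k D) (hτ : LipschitzWith L τ) (hτ0 : τ 0 = 0)
    (hτpos : ∀ z, 0 ≤ z → τ z ≤ 0) {w : X →ᵇ ℝ} {B : ℝ} (hB : ∀ y, w y ≤ B) (x : X) :
    nonlocal μ k τ w x ≤ D * L * (B - w x) := by
  have hc : 0 ≤ (L : ℝ) * (B - w x) := mul_nonneg L.2 (sub_nonneg.2 (hB x))
  rw [mul_assoc]
  refine hK.integral_mul_le x (integrable_mul_comp_sub hK hτ hτ0 w x) hc fun y => ?_
  rcases le_total (w y) (w x) with h | h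
  · exact (hτpos _ (sub_nonneg.2 h)).trans hc
  · calc τ (w x - w y) ≤ L * |w x - w y| :=
          (le_abs_self _).trans (abs_le_mul_abs_of_lipschitzWith hτ hτ0 _)
      _ = L * (w y - w x) := by rw [abs_of_nonpos (sub_nonpos.2 h), neg_sub]
      _ ≤ L * (B - w x) := by gcongr; exact hB y

lemma le_nonlocal (hK : IsAdmissibleKernel μ k D) (hτ : LipschitzWith L τ) (hτ0 : τ 0 = 0)
    (hτneg : ∀ z, z ≤ 0 → 0 ≤ τ z) {w : X →ᵇ ℝ} {B : ℝ} (hB : ∀ y, B ≤ w y) (x : X) :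
    D * L * (B - w x) ≤ nonlocal μ k τ w x := by
  have hc : 0 ≤ (L : ℝ) * (w x - B) := mul_nonneg L.2 (sub_nonneg.2 (hB x))
  have hint : Integrable (fun y => k x y * -τ (w x - w y)) μ := by
    simpa only [mul_neg] using (integrable_mul_comp_sub hK hτ hτ0 w x).fun_neg
  have := hK.integral_mul_le x hint hc fun y => by
    rcases le_total (w x) (w y) with h | h
    · exact (neg_nonpos.2 (hτneg _ (sub_nonpos.2 h))).trans hc
    · calc -τ (w x - w y) ≤ L * |w x - w y| :=
            (neg_le_abs _).trans (abs_le_mul_abs_of_lipschitzWith hτ hτ0 _)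
        _ = L * (w x - w y) := by rw [abs_of_nonneg (sub_nonneg.2 h)]
        _ ≤ L * (w x - B) := by gcongr; exact hB y
  simp only [mul_neg, integral_neg] at this
  rw [nonlocal]
  linarith

lemma continuous_nonlocal_slice (hK : IsAdmissibleKernel μ k D) (hτ : LipschitzWith L τ)
    (hτ0 : τ 0 = 0) (hT : 0 ≤ T) (W : (X × Icc (0:ℝ) T) →ᵇ ℝ) (x : X) :
    Continuous fun s => nonlocal μ k τ (slice hT W s) x := by
  have hW : ∀ y, Continuous fun s => W (y, projIcc 0 T hT s) := fun y =>
    W.continuous.comp (continuous_const.prodMk continuous_projIcc)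
  refine continuous_of_dominated (bound := fun y => k x y * (2 * L * ‖W‖))
    (fun s => (integrable_mul_comp_sub hK hτ hτ0 _ x).aestronglyMeasurable)
    (fun s => .of_forall fun y => ?_) ((hK.integrable x).mul_const _)
    (.of_forall fun y => continuous_const.mul (hτ.continuous.comp ((hW x).sub (hW y))))
  rw [norm_mul, Real.norm_of_nonneg (hK.nonneg x y), Real.norm_eq_abs]
  refine mul_le_mul_of_nonneg_left ((abs_comp_sub_le hτ hτ0 _ x y).trans ?_) (hK.nonneg x y)
  gcongr
  exact norm_slice_le hT W s

lemma continuous_picardFun [FirstCountableTopology X] (hK : IsAdmissibleKernel μ k D)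
    (hτ : LipschitzWith L τ) (hτ0 : τ 0 = 0) {u₀ : X → ℝ} (hu₀ : Continuous u₀) (hT : 0 ≤ T)
    (W : (X × Icc (0:ℝ) T) →ᵇ ℝ) : Continuous (picardFun μ k τ u₀ hT W) := by
  have hg := continuous_nonlocal_slice hK hτ hτ0 hT W
  have hgC := abs_nonlocal_slice_le hK hτ hτ0 hT W
  refine (hu₀.comp continuous_fst).add (continuous_prod_of_continuous_lipschitzWith' _
    (D * (2 * L * ‖W‖)).toNNReal (fun x => LipschitzWith.of_dist_le' fun a b => ?_) fun t => ?_)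
  · rw [Real.dist_eq, intervalIntegral.integral_interval_sub_left ((hg x).intervalIntegrable _ _)
      ((hg x).intervalIntegrable _ _), Subtype.dist_eq, Real.dist_eq]
    exact intervalIntegral.norm_integral_le_of_norm_le_const
      (f := fun s => nonlocal μ k τ (slice hT W s) x) fun s _ => hgC s x
  · simp only
    exact intervalIntegral.continuous_of_dominated_interval
      (fun x => (hg x).aestronglyMeasurable) (fun x => .of_forall fun s _ => hgC s x)
      intervalIntegrable_const (.of_forall fun s _ => continuous_nonlocal hK hτ hτ0 _)

def picard [FirstCountableTopology X] (hK : IsAdmissibleKernel μ k D) (hτ : LipschitzWith L τ)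
    (hτ0 : τ 0 = 0) (u₀ : X →ᵇ ℝ) (hT : 0 ≤ T) (W : (X × Icc (0:ℝ) T) →ᵇ ℝ) :
    (X × Icc (0:ℝ) T) →ᵇ ℝ :=
  .ofNormedAddCommGroup (picardFun μ k τ u₀ hT W)
    (continuous_picardFun hK hτ hτ0 u₀.continuous hT W)
    _ (norm_picardFun_le hK hτ hτ0 u₀ hT W)

lemma picard_eq_iff [FirstCountableTopology X] (hK : IsAdmissibleKernel μ k D)
    (hτ : LipschitzWith L τ) (hτ0 : τ 0 = 0) (u₀ : X →ᵇ ℝ) (hT : 0 ≤ T)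
    {W : (X × Icc (0:ℝ) T) →ᵇ ℝ} : picard hK hτ hτ0 u₀ hT W = W ↔ ⇑W = picardFun μ k τ u₀ hT W :=
  ⟨fun h => (congrArg DFunLike.coe h).symm, fun h => DFunLike.coe_injective h.symm⟩

lemma abs_picardFun_sub_picardFun_le (hK : IsAdmissibleKernel μ k D) (hτ : LipschitzWith L τ)
    (hτ0 : τ 0 = 0) (u₀ : X → ℝ) (hT : 0 ≤ T) {W V : (X × Icc (0:ℝ) T) →ᵇ ℝ} {a : ℝ} {N : ℕ}
    (hWV : ∀ p, |W p - V p| ≤ a * (p.2 : ℝ) ^ N) (p : X × Icc (0:ℝ) T) :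
    |picardFun μ k τ u₀ hT W p - picardFun μ k τ u₀ hT V p| ≤
      2 * D * L * a * (p.2 : ℝ) ^ (N + 1) / (N + 1) := by
  have hg := fun W => continuous_nonlocal_slice hK hτ hτ0 hT W p.1
  rw [picardFun, picardFun, add_sub_add_left_eq_sub, ← intervalIntegral.integral_sub
    ((hg W).intervalIntegrable _ _) ((hg V).intervalIntegrable _ _)]
  have hle : ∀ s ∈ Ioc (0:ℝ) p.2, ‖nonlocal μ k τ (slice hT W s) p.1 -
      nonlocal μ k τ (slice hT V s) p.1‖ ≤ D * (2 * L * (a * s ^ N)) := fun s hs => by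
    refine abs_nonlocal_sub_nonlocal_le hK hτ hτ0 (fun y => ?_) p.1
    have hs' : s ∈ Icc (0:ℝ) T := ⟨hs.1.le, hs.2.trans p.2.2.2⟩
    simpa [projIcc_of_mem hT hs'] using hWV (y, ⟨s, hs'⟩)
  refine (intervalIntegral.norm_integral_le_of_norm_le p.2.2.1 (.of_forall hle)
    (Continuous.intervalIntegrable (by fun_prop) _ _)).trans (le_of_eq ?_)
  simp only [intervalIntegral.integral_const_mul, integral_pow]
  field_simp
  ring

theorem existsUnique_picard_eq [Nonempty X] [FirstCountableTopology X]
    (hK : IsAdmissibleKernel μ k D) (hτ : LipschitzWith L τ) (hτ0 : τ 0 = 0) (u₀ : X →ᵇ ℝ)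
    (hT : 0 ≤ T) : ∃! W, picard hK hτ hτ0 u₀ hT W = W := by
  have := hK.bound_nonneg (Classical.arbitrary X)
  exact existsUnique_isFixedPt_of_volterra hT (c := 2 * D * L) (by positivity) _
    fun W V a N hWV p => abs_picardFun_sub_picardFun_le hK hτ hτ0 u₀ hT hWV p

theorem abs_le_of_eq_picardFun (hK : IsAdmissibleKernel μ k D) (hτ : LipschitzWith L τ)
    (hτpos : ∀ z, 0 ≤ z → τ z ≤ 0) (hτneg : ∀ z, z ≤ 0 → 0 ≤ τ z) {u₀ : X → ℝ} {A : ℝ}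
    (hu₀ : ∀ x, |u₀ x| ≤ A) (hT : 0 ≤ T) {W : (X × Icc (0:ℝ) T) →ᵇ ℝ}
    (hW : ⇑W = picardFun μ k τ u₀ hT W) (p : X × Icc (0:ℝ) T) : |W p| ≤ A := by
  have hτ0 : τ 0 = 0 := le_antisymm (hτpos 0 le_rfl) (hτneg 0 le_rfl)
  have hD := hK.bound_nonneg p.1
  have hW' : ∀ x, ∀ t ∈ Icc 0 T, W (x, projIcc 0 T hT t) =
      u₀ x + ∫ s in (0:ℝ)..t, nonlocal μ k τ (slice hT W s) x := fun x t ht => by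
    rw [projIcc_of_mem hT ht, hW]
    rfl
  have hW₀ : ∀ x, W (x, projIcc 0 T hT 0) = u₀ x := fun x => by
    rw [hW' x 0 ⟨le_rfl, hT⟩, intervalIntegral.integral_same, add_zero]
  have := abs_le_of_initial_abs_le (c := D * L) (ψ := fun x t => W (x, projIcc 0 T hT t))
    (G := fun x s => nonlocal μ k τ (slice hT W s) x) (by positivity)
    (fun x t ht => by simp only [hW' x t ht, hW₀])
    (fun x => (continuous_nonlocal_slice hK hτ hτ0 hT W x).intervalIntegrable _ _)
    (fun x s _ => abs_nonlocal_slice_le hK hτ hτ0 hT W s x)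
    (fun x s _ B hB => nonlocal_le hK hτ hτ0 hτpos (w := slice hT W s) hB x)
    (fun x s _ B hB => le_nonlocal hK hτ hτ0 hτneg (w := slice hT W s) hB x)
    (fun x => (hW₀ x).symm ▸ hu₀ x) p.1 p.2.2
  rwa [projIcc_val] at this

lemma exists_lipschitzWith_eq_of_coordination {f : ℝ → ℝ}
    (hf : ∀ R : ℝ, 0 < R → ∃ L : ℝ, ∀ a b : ℝ, |a| ≤ R → |b| ≤ R → |f a - f b| ≤ L * |a - b|)
    (hfpos : ∀ z, 0 ≤ z → f z ≤ 0) (hfneg : ∀ z, z ≤ 0 → 0 ≤ f z) (R : ℝ) :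
    ∃ g : ℝ → ℝ, ∃ L, LipschitzWith L g ∧ (∀ z, 0 ≤ z → g z ≤ 0) ∧ (∀ z, z ≤ 0 → 0 ≤ g z) ∧
      ∀ z, |z| ≤ R → g z = f z := by
  obtain ⟨R', hR'pos, hRR'⟩ : ∃ R' : ℝ, 0 < R' ∧ R ≤ R' := ⟨|R| + 1, by positivity, by
    linarith [le_abs_self R]⟩
  have hR' : -R' ≤ R' := by linarith
  obtain ⟨L, hL⟩ := hf R' hR'pos
  have hclamp : ∀ z, |(projIcc (-R') R' hR' z : ℝ)| ≤ R' := fun z => abs_le.2 (projIcc _ _ hR' z).2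
  refine ⟨fun z => f (projIcc (-R') R' hR' z), (max L 0).toNNReal,
    LipschitzWith.of_dist_le' fun a b => ?_, fun z hz => hfpos _ ?_, fun z hz => hfneg _ ?_,
    fun z hz => ?_⟩
  · rw [Real.dist_eq, Real.dist_eq]
    calc |f (projIcc (-R') R' hR' a) - f (projIcc (-R') R' hR' b)|
        ≤ L * |(projIcc (-R') R' hR' a : ℝ) - projIcc (-R') R' hR' b| :=
          hL _ _ (hclamp a) (hclamp b)
      _ ≤ max L 0 * |(projIcc (-R') R' hR' a : ℝ) - projIcc (-R') R' hR' b| := by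
        gcongr; exact le_max_left _ _
      _ ≤ max L 0 * |a - b| :=
        mul_le_mul_of_nonneg_left (abs_projIcc_sub_projIcc hR') (le_max_right _ _)
  · rw [coe_projIcc]; exact le_max_of_le_right (le_min hR'pos.le hz)
  · rw [coe_projIcc]; exact max_le (by linarith) (min_le_of_right_le hz)
  · have := abs_le.1 hz
    show f (projIcc (-R') R' hR' z) = f z
    rw [projIcc_of_mem hR' ⟨by linarith, by linarith⟩]

lemma exists_boundedContinuousFunction_eq {α β : Type*} [TopologicalSpace α] [TopologicalSpace β]
    {s : Set α} {t : Set β} {v : α → β → ℝ}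
    (hv : ContinuousOn (fun p : α × β => v p.1 p.2) (s ×ˢ t)) {M : ℝ}
    (hM : ∀ x ∈ s, ∀ y ∈ t, |v x y| ≤ M) : ∃ V : (s × t) →ᵇ ℝ, ∀ p, V p = v p.1 p.2 :=
  ⟨.ofNormedAddCommGroup (fun p => v p.1 p.2)
    ((continuousOn_iff_continuous_domRestrict.1 hv).comp (Homeomorph.Set.prod s t).symm.continuous)
    M fun p => hM _ p.1.2 _ p.2.2, fun _ => rfl⟩

lemma exists_continuousOn_eq {α β : Type*} [TopologicalSpace α] [TopologicalSpace β]
    {s : Set α} {t : Set β} {W : s × t → ℝ} (hW : Continuous W) :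
    ∃ u : α → β → ℝ, ContinuousOn (fun p : α × β => u p.1 p.2) (s ×ˢ t) ∧
      ∀ p : s × t, W p = u p.1 p.2 := by
  classical
  refine ⟨fun x y => if h : x ∈ s ∧ y ∈ t then W (⟨x, h.1⟩, ⟨y, h.2⟩) else 0,
    continuousOn_iff_continuous_domRestrict.2 ?_, fun p => by
      dsimp only; rw [dif_pos ⟨p.1.2, p.2.2⟩]⟩
  refine (hW.comp (Homeomorph.Set.prod s t).continuous).congr fun q => ?_
  show W _ = dite _ _ _
  rw [dif_pos (mem_prod.1 q.2)]
  rfl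

lemma isAdmissibleKernel_subtype {α : Type*} [PseudoMetricSpace α] [MeasurableSpace α]
    {ν : Measure α} {Ω : Set α} (hΩ : MeasurableSet Ω) {K : α → α → ℝ} {D : ℝ}
    (hK0 : ∀ x y, 0 ≤ K x y) (hKint : ∀ x ∈ Ω, IntegrableOn (K x) Ω ν)
    (hKcont : ∀ x ∈ Ω, ∀ ε > (0:ℝ), ∃ δ > (0:ℝ), ∀ x' ∈ Ω, dist x' x < δ →
      (∫ y in Ω, |K x' y - K x y| ∂ν) < ε)
    (hD : ∀ x ∈ Ω, (∫ y in Ω, K x y ∂ν) ≤ D) :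
    IsAdmissibleKernel (ν.comap Subtype.val) (fun x y : Ω => K x y) D where
  nonneg x y := hK0 x y
  integrable x := (integrableOn_iff_comap_subtypeVal hΩ).1 (hKint x x.2)
  integral_le x := (integral_subtype_comap hΩ (K x)).trans_le (hD x x.2)
  tendsto_integral_abs_sub x := by
    refine Metric.tendsto_nhds.2 fun ε hε => ?_
    obtain ⟨δ, hδ, h⟩ := hKcont x x.2 ε hε
    refine Metric.eventually_nhds_iff.2 ⟨δ, hδ, fun x' hx' => ?_⟩
    rw [integral_subtype_comap hΩ (fun y => |K x' y - K x y|), Real.dist_eq, sub_zero,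
      abs_of_nonneg (integral_nonneg fun _ => abs_nonneg _)]
    exact h x' x'.2 hx'

lemma forall_eq_iff_coe_eq_picardFun {α : Type*} [TopologicalSpace α] [MeasurableSpace α]
    {ν : Measure α} {Ω : Set α} (hΩ : MeasurableSet Ω) (K : α → α → ℝ) (τ : ℝ → ℝ)
    (u₀ : α → ℝ) (hT : 0 ≤ T) {V : (Ω × Icc (0:ℝ) T) →ᵇ ℝ} {v : α → ℝ → ℝ}
    (hV : ∀ p, V p = v p.1 p.2) :
    (∀ x ∈ Ω, ∀ t ∈ Icc (0:ℝ) T,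
      v x t = u₀ x + ∫ s in (0:ℝ)..t, ∫ y in Ω, K x y * τ (v x s - v y s) ∂ν) ↔
    ⇑V = picardFun (ν.comap Subtype.val) (fun x y : Ω => K x y) τ (fun x : Ω => u₀ x) hT V := by
  have key : ∀ (x : Ω) (t : Icc (0:ℝ) T),
      ∫ s in (0:ℝ)..t, nonlocal (ν.comap Subtype.val) (fun x y : Ω => K x y) τ (slice hT V s) x =
        ∫ s in (0:ℝ)..t, ∫ y in Ω, K x y * τ (v x s - v y s) ∂ν := fun x t => by
    refine intervalIntegral.integral_congr fun s hs => ?_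
    rw [uIcc_of_le t.2.1] at hs
    simp only [nonlocal, slice_apply, projIcc_of_mem hT ⟨hs.1, hs.2.trans t.2.2⟩, hV]
    exact integral_subtype_comap hΩ (fun y => K x y * τ (v x s - v y s))
  constructor
  · intro h
    funext p
    rw [hV, h p.1 p.1.2 p.2 p.2.2, picardFun, key]
  · intro h x hx t ht
    rw [← hV (⟨x, hx⟩, ⟨t, ht⟩), h, picardFun, key]

end NonlocalCoordination

end

open NonlocalCoordination

theorem statement5_general
    (n : ℕ) (Ω : Set (EuclideanSpace ℝ (Fin n)))
    (hΩne : Ω.Nonempty) (hΩmeas : MeasurableSet Ω)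
    -- `K` is an admissible kernel:
    (K : EuclideanSpace ℝ (Fin n) → EuclideanSpace ℝ (Fin n) → ℝ)
    (hKnonneg : ∀ x y, 0 ≤ K x y)
    (hKint : ∀ x ∈ Ω, IntegrableOn (K x) Ω)
    (hKcont : ∀ x ∈ Ω, ∀ ε > (0:ℝ), ∃ δ > (0:ℝ), ∀ x' ∈ Ω, dist x' x < δ →
        (∫ y in Ω, |K x' y - K x y|) < ε)
    (D : ℝ) (hD : ∀ x ∈ Ω, (∫ y in Ω, K x y) ≤ D)
    -- `ρ` is a recognition function satisfying the coordination condition: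
    (ρ : ℝ → ℝ)
    (hρ'lip : ∀ R : ℝ, 0 < R → ∃ L : ℝ, ∀ a b : ℝ, |a| ≤ R → |b| ≤ R →
        |deriv ρ a - deriv ρ b| ≤ L * |a - b|)
    (hcoord_pos : ∀ z : ℝ, 0 ≤ z → deriv ρ z ≤ 0)
    (hcoord_neg : ∀ z : ℝ, z ≤ 0 → 0 ≤ deriv ρ z)
    -- `u₀` bounded and continuous on `Ω`:
    (u₀ : EuclideanSpace ℝ (Fin n) → ℝ)
    (hu₀cont : ContinuousOn u₀ Ω) (M₀ : ℝ) (hu₀bd : ∀ x ∈ Ω, |u₀ x| ≤ M₀) :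
    ∀ T > (0:ℝ), ∃ u : EuclideanSpace ℝ (Fin n) → ℝ → ℝ,
      (ContinuousOn (fun p : EuclideanSpace ℝ (Fin n) × ℝ => u p.1 p.2) (Ω ×ˢ Icc 0 T) ∧
       (∃ M : ℝ, ∀ x ∈ Ω, ∀ t ∈ Icc (0:ℝ) T, |u x t| ≤ M) ∧
       (∀ x ∈ Ω, ∀ t ∈ Icc (0:ℝ) T,
          u x t = u₀ x + ∫ s in (0:ℝ)..t, ∫ y in Ω, K x y * deriv ρ (u x s - u y s))) ∧
      (∀ v : EuclideanSpace ℝ (Fin n) → ℝ → ℝ,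
        ContinuousOn (fun p : EuclideanSpace ℝ (Fin n) × ℝ => v p.1 p.2) (Ω ×ˢ Icc 0 T) →
        (∃ M : ℝ, ∀ x ∈ Ω, ∀ t ∈ Icc (0:ℝ) T, |v x t| ≤ M) →
        (∀ x ∈ Ω, ∀ t ∈ Icc (0:ℝ) T,
          v x t = u₀ x + ∫ s in (0:ℝ)..t, ∫ y in Ω, K x y * deriv ρ (v x s - v y s)) →
        ∀ x ∈ Ω, ∀ t ∈ Icc (0:ℝ) T, v x t = u x t) := by
  intro T hT
  have : Nonempty Ω := hΩne.to_subtype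
  have hK := isAdmissibleKernel_subtype hΩmeas hKnonneg hKint hKcont hD
  have hu₀ : ∀ x : Ω, |u₀ x| ≤ M₀ := fun x => hu₀bd x x.2
  let u₀' : Ω →ᵇ ℝ := .ofNormedAddCommGroup (fun x => u₀ x)
    (continuousOn_iff_continuous_domRestrict.1 hu₀cont) M₀ hu₀
  obtain ⟨σ, L, hσ, hσpos, hσneg, hσρ⟩ :=
    exists_lipschitzWith_eq_of_coordination hρ'lip hcoord_pos hcoord_neg (2 * M₀)
  have hσ0 : σ 0 = 0 := le_antisymm (hσpos 0 le_rfl) (hσneg 0 le_rfl)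
  obtain ⟨w, hw, hw_unique⟩ := existsUnique_picard_eq hK hσ hσ0 u₀' hT.le
  have hw_eq := (picard_eq_iff hK hσ hσ0 u₀' hT.le).1 hw
  have hw_bd := abs_le_of_eq_picardFun hK hσ hσpos hσneg hu₀ hT.le hw_eq
  obtain ⟨u, hu_cont, hu⟩ := exists_continuousOn_eq w.continuous
  refine ⟨u, ⟨hu_cont, ⟨M₀, fun x hx t ht => hu (⟨x, hx⟩, ⟨t, ht⟩) ▸ hw_bd _⟩,
    (forall_eq_iff_coe_eq_picardFun hΩmeas K (deriv ρ) u₀ hT.le hu).2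
      (hw_eq.trans (picardFun_congr _ hT.le hw_bd hσρ))⟩, ?_⟩
  rintro v hv_cont ⟨M, hM⟩ hv x hx t ht
  obtain ⟨V, hV⟩ := exists_boundedContinuousFunction_eq hv_cont hM
  obtain ⟨τ, L', hτ, hτpos, hτneg, hτρ⟩ :=
    exists_lipschitzWith_eq_of_coordination hρ'lip hcoord_pos hcoord_neg (2 * M)
  have hVρ := (forall_eq_iff_coe_eq_picardFun hΩmeas K (deriv ρ) u₀ hT.le hV).1 hv
  have hV_bd := abs_le_of_eq_picardFun hK hτ hτpos hτneg hu₀ hT.le <| hVρ.trans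
    (picardFun_congr _ hT.le (fun p => (hV p).symm ▸ hM _ p.1.2 _ p.2.2) hτρ).symm
  have hV_fixed : picard hK hσ hσ0 u₀' hT.le V = V :=
    (picard_eq_iff hK hσ hσ0 u₀' hT.le).2 (hVρ.trans (picardFun_congr _ hT.le hV_bd hσρ).symm)
  calc v x t = V (⟨x, hx⟩, ⟨t, ht⟩) := (hV (⟨x, hx⟩, ⟨t, ht⟩)).symm
    _ = u x t := by rw [hw_unique V hV_fixed, hu]

/-- Global existence and uniqueness for coordination games.  If `ρ` is a
recognition function satisfying the coordination condition, then for every `T > 0` the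
initial value problem has exactly one bounded continuous solution on `Ω × [0,T]`. -/
theorem statement5
    (n : ℕ) (Ω : Set (EuclideanSpace ℝ (Fin n)))
    (hΩne : Ω.Nonempty) (hΩmeas : MeasurableSet Ω)
    -- `K` is an admissible kernel:
    (K : EuclideanSpace ℝ (Fin n) → EuclideanSpace ℝ (Fin n) → ℝ)
    (hKnonneg : ∀ x y, 0 ≤ K x y)
    (hKmeas : Measurable (Function.uncurry K))
    (hKint : ∀ x ∈ Ω, IntegrableOn (K x) Ω)
    (hKcont : ∀ x ∈ Ω, ∀ ε > (0:ℝ), ∃ δ > (0:ℝ), ∀ x' ∈ Ω, dist x' x < δ →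
        (∫ y in Ω, |K x' y - K x y|) < ε)
    (D : ℝ) (hD : ∀ x ∈ Ω, (∫ y in Ω, K x y) ≤ D)
    -- `ρ` is a recognition function satisfying the coordination condition:
    (ρ : ℝ → ℝ) (hρ : Differentiable ℝ ρ)
    (hρ'lip : ∀ R : ℝ, 0 < R → ∃ L : ℝ, ∀ a b : ℝ, |a| ≤ R → |b| ≤ R →
        |deriv ρ a - deriv ρ b| ≤ L * |a - b|)
    (hcoord_pos : ∀ z : ℝ, 0 ≤ z → deriv ρ z ≤ 0)
    (hcoord_neg : ∀ z : ℝ, z ≤ 0 → 0 ≤ deriv ρ z)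
    -- `u₀` bounded and continuous on `Ω`:
    (u₀ : EuclideanSpace ℝ (Fin n) → ℝ)
    (hu₀cont : ContinuousOn u₀ Ω) (M₀ : ℝ) (hu₀bd : ∀ x ∈ Ω, |u₀ x| ≤ M₀) :
    ∀ T > (0:ℝ), ∃ u : EuclideanSpace ℝ (Fin n) → ℝ → ℝ,
      (ContinuousOn (fun p : EuclideanSpace ℝ (Fin n) × ℝ => u p.1 p.2) (Ω ×ˢ Icc 0 T) ∧
       (∃ M : ℝ, ∀ x ∈ Ω, ∀ t ∈ Icc (0:ℝ) T, |u x t| ≤ M) ∧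
       (∀ x ∈ Ω, ∀ t ∈ Icc (0:ℝ) T,
          u x t = u₀ x + ∫ s in (0:ℝ)..t, ∫ y in Ω, K x y * deriv ρ (u x s - u y s))) ∧
      (∀ v : EuclideanSpace ℝ (Fin n) → ℝ → ℝ,
        ContinuousOn (fun p : EuclideanSpace ℝ (Fin n) × ℝ => v p.1 p.2) (Ω ×ˢ Icc 0 T) →
        (∃ M : ℝ, ∀ x ∈ Ω, ∀ t ∈ Icc (0:ℝ) T, |v x t| ≤ M) →
        (∀ x ∈ Ω, ∀ t ∈ Icc (0:ℝ) T,
          v x t = u₀ x + ∫ s in (0:ℝ)..t, ∫ y in Ω, K x y * deriv ρ (v x s - v y s)) →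
        ∀ x ∈ Ω, ∀ t ∈ Icc (0:ℝ) T, v x t = u x t) :=
  statement5_general n Ω hΩne hΩmeas K hKnonneg hKint hKcont D hD ρ hρ'lip hcoord_pos hcoord_neg u₀
    hu₀cont M₀ hu₀bd
end
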